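/- arXiv:2009.12838 — 6 statements merged into one kernel-verified Lean document; each statement's English description precedes it below -/
import Mathlib

section
/- (Coupling characterization of the Prokhorov metric, converse direction) Let (S,d) be a Polish space and P, Q ∈ P(S) with d_P(P,Q) < ε. Then there exists a coupling m of P and Q such that m{(x,y) : d(x,y) ≥ ε} ≤ ε. -/
open MeasureTheory

/-- The Prokhorov distance between Borel probability measures on a metric space. -/
noncomputable def prokhorovDist {S : Type*} [MetricSpace S] [MeasurableSpace S]
    (P Q : Measure S) : ℝ :=
  sInf {ε : ℝ | 0 < ε ∧ ∀ A : Set S, MeasurableSet A →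
    P A ≤ Q (Metric.thickening ε A) + ENNReal.ofReal ε}

/-!
Write `ε = δ + 4θ` with `δ` admissible in the infimum defining `prokhorovDist P Q`, and cut `S`
into finitely many measurable pieces of diameter `≤ 2θ` that carry all of `P` and `Q` but mass `θ`.
For unions of pieces the Prokhorov inequality is a Hall condition with defect `δ + θ` for
transporting the masses of `P` on the pieces to those of `Q` along pairs of pieces at distance
`< δ`. Hall's marriage theorem, after scaling the masses to integers, yields such a partial
transport plan missing mass at most `δ + 2θ + η`. Spreading it over the product blocks by products
of conditioned measures, and coupling the leftover masses independently, gives a coupling whose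
mass on `{ε ≤ d(x, y)}` is at most that missing mass, since related blocks lie in
`{d(x, y) < δ + 4θ}`; take `η = θ`.
-/

open Set Function Metric ProbabilityTheory
open scoped Finset ENNReal NNReal

section Transport

variable {ι κ : Type*}

/-- Hall's theorem for one vertex per unit of supply `a i` on the left, and one vertex per unit
of demand `b j` plus `c` vertices adjacent to everything on the right. -/
theorem exists_injective_sigma_of_forall_sum_le [Fintype κ] (a : ι → ℕ) (b : κ → ℕ) (c : ℕ)
    (R : ι → κ → Prop)
    (h : ∀ (A : Finset ι) (B : Finset κ), (∀ i ∈ A, ∀ j, R i j → j ∈ B) →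
      ∑ i ∈ A, a i ≤ ∑ j ∈ B, b j + c) :
    ∃ f : (Σ i, Fin (a i)) → (Σ j, Fin (b j)) ⊕ Fin c,
      f.Injective ∧ ∀ l y, f l = .inl y → R l.1 y.1 := by
  classical
  let nbhd (l : Σ i, Fin (a i)) : Finset ((Σ j, Fin (b j)) ⊕ Fin c) :=
    ({y | R l.1 y.1} : Finset _).disjSum Finset.univ
  suffices hall : ∀ W : Finset (Σ i, Fin (a i)), #W ≤ #(W.biUnion nbhd) by
    obtain ⟨f, hf, hfR⟩ := (Finset.all_card_le_biUnion_card_iff_exists_injective nbhd).1 hall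
    refine ⟨f, hf, fun l y hl => ?_⟩
    simpa [nbhd, hl] using hfR l
  intro W
  obtain rfl | ⟨l₀, hl₀⟩ := W.eq_empty_or_nonempty
  · simp
  set A := W.image Sigma.fst
  set B : Finset κ := {j | ∃ i ∈ A, R i j}
  calc #W ≤ #(A.sigma fun i => (Finset.univ : Finset (Fin (a i)))) :=
        Finset.card_le_card fun l hl =>
          Finset.mem_sigma.2 ⟨Finset.mem_image_of_mem _ hl, Finset.mem_univ _⟩
    _ = ∑ i ∈ A, a i := by simp
    _ ≤ ∑ j ∈ B, b j + c :=
        h A B fun i hi j hij => Finset.mem_filter.2 ⟨Finset.mem_univ _, i, hi, hij⟩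
    _ = #((B.sigma fun j => (Finset.univ : Finset (Fin (b j)))).disjSum
          (Finset.univ : Finset (Fin c))) := by
        simp
    _ ≤ #(W.biUnion nbhd) := by
        refine Finset.card_le_card fun r hr => ?_
        rcases Finset.mem_disjSum.1 hr with ⟨y, hy, rfl⟩ | ⟨d, -, rfl⟩
        · obtain ⟨i, hi, hiy⟩ := (Finset.mem_filter.1 (Finset.mem_sigma.1 hy).1).2
          obtain ⟨l, hl, rfl⟩ := Finset.mem_image.1 hi
          exact Finset.mem_biUnion.2 ⟨l, hl, by simpa [nbhd] using hiy⟩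
        · exact Finset.mem_biUnion.2 ⟨l₀, hl₀, by simp [nbhd]⟩

lemma sum_floor_mul_le_sum_floor_mul_add [Fintype κ] {p : ι → ℝ≥0} {q : κ → ℝ≥0} {t : ℝ≥0} (N : ℝ≥0)
    {A : Finset ι} {B : Finset κ} (h : ∑ i ∈ A, p i ≤ ∑ j ∈ B, q j + t) :
    ∑ i ∈ A, ⌊N * p i⌋₊ ≤ ∑ j ∈ B, ⌊N * q j⌋₊ + (⌈N * t⌉₊ + Fintype.card κ) := by
  suffices ∑ i ∈ A, (⌊N * p i⌋₊ : ℝ≥0) ≤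
      ∑ j ∈ B, (⌊N * q j⌋₊ : ℝ≥0) + (⌈N * t⌉₊ + Fintype.card κ) by exact_mod_cast this
  calc ∑ i ∈ A, (⌊N * p i⌋₊ : ℝ≥0) ≤ N * ∑ i ∈ A, p i := by
        rw [Finset.mul_sum]; exact Finset.sum_le_sum fun i _ => Nat.floor_le zero_le
    _ ≤ N * (∑ j ∈ B, q j + t) := by gcongr
    _ ≤ ∑ j ∈ B, ((⌊N * q j⌋₊ : ℝ≥0) + 1) + ⌈N * t⌉₊ := by
        rw [mul_add, Finset.mul_sum]
        gcongr with j
        exacts [(Nat.lt_floor_add_one _).le, Nat.le_ceil _]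
    _ ≤ ∑ j ∈ B, (⌊N * q j⌋₊ : ℝ≥0) + (⌈N * t⌉₊ + Fintype.card κ) := by
        rw [Finset.sum_add_distrib, Finset.sum_const, nsmul_one, add_assoc, add_comm (#B : ℝ≥0)]
        gcongr
        exact_mod_cast Finset.card_le_univ B

variable [Fintype ι] [Fintype κ]

theorem exists_nat_subtransport_of_injective {a : ι → ℕ} {b : κ → ℕ} {c : ℕ}
    {R : ι → κ → Prop} (f : (Σ i, Fin (a i)) → (Σ j, Fin (b j)) ⊕ Fin c)
    (hf : f.Injective) (hfR : ∀ l y, f l = .inl y → R l.1 y.1) :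
    ∃ M : ι → κ → ℕ, (∀ i j, M i j ≠ 0 → R i j) ∧ (∀ i, ∑ j, M i j ≤ a i) ∧
      (∀ j, ∑ i, M i j ≤ b j) ∧ ∑ i, a i ≤ ∑ i, ∑ j, M i j + c := by
  classical
  -- the column of a right vertex; `none` for the `c` extra vertices
  let col (r : (Σ j, Fin (b j)) ⊕ Fin c) : Option κ := r.getLeft?.map Sigma.fst
  have hcol_some {r j} (hr : col r = some j) : ∃ y : Fin (b j), r = .inl ⟨j, y⟩ := by
    rcases r with ⟨j', y⟩ | d <;> simp [col] at hr
    exact ⟨hr ▸ y, by subst hr; rfl⟩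
  have hfiber (o : Option κ) : #{l | col (f l) = o} ≤ o.elim c b :=
    calc #{l | col (f l) = o} ≤ #{r | col r = o} :=
          Finset.card_le_card_of_injOn f (fun l hl => by simpa using hl) hf.injOn
      _ = o.elim c b := by
          cases o <;> simp only [col, Finset.card_filter, Fintype.sum_sum_type,
            Fintype.sum_sigma] <;> simp
  have hsum (P : Option κ → Prop) [DecidablePred P] :
      ∑ i, #{x : Fin (a i) | P (col (f ⟨i, x⟩))} = #{l | P (col (f l))} := by
    simp only [Finset.card_filter, Fintype.sum_sigma]
  have hrow (i : ι) : a i = #{x : Fin (a i) | col (f ⟨i, x⟩) = none} +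
      ∑ j, #{x : Fin (a i) | col (f ⟨i, x⟩) = some j} := by
    rw [← Fintype.sum_option (fun o => #{x : Fin (a i) | col (f ⟨i, x⟩) = o}),
      ← Finset.card_eq_sum_card_fiberwise (fun _ _ => Finset.mem_univ _), Finset.card_univ,
      Fintype.card_fin]
  refine ⟨fun i j => #{x : Fin (a i) | col (f ⟨i, x⟩) = some j}, fun i j hij => ?_,
    fun i => (hrow i).symm ▸ Nat.le_add_left _ _, fun j => hsum (· = some j) ▸ hfiber (some j), ?_⟩
  · obtain ⟨x, hx⟩ := Finset.card_ne_zero.1 hij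
    obtain ⟨y, hy⟩ := hcol_some (Finset.mem_filter.1 hx).2
    exact hfR _ _ hy
  · calc ∑ i, a i = #{l | col (f l) = none} +
          ∑ i, ∑ j, #{x : Fin (a i) | col (f ⟨i, x⟩) = some j} := by
          rw [← hsum (· = none), ← Finset.sum_add_distrib]
          exact Finset.sum_congr rfl fun i _ => hrow i
      _ ≤ _ := by rw [add_comm]; gcongr; exact hfiber none

theorem exists_nat_subtransport (a : ι → ℕ) (b : κ → ℕ) (c : ℕ) (R : ι → κ → Prop)
    (h : ∀ (A : Finset ι) (B : Finset κ), (∀ i ∈ A, ∀ j, R i j → j ∈ B) →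
      ∑ i ∈ A, a i ≤ ∑ j ∈ B, b j + c) :
    ∃ M : ι → κ → ℕ, (∀ i j, M i j ≠ 0 → R i j) ∧ (∀ i, ∑ j, M i j ≤ a i) ∧
      (∀ j, ∑ i, M i j ≤ b j) ∧ ∑ i, a i ≤ ∑ i, ∑ j, M i j + c := by
  obtain ⟨f, hf, hfR⟩ := exists_injective_sigma_of_forall_sum_le a b c R h
  exact exists_nat_subtransport_of_injective f hf hfR

theorem exists_nnreal_subtransport (p : ι → ℝ≥0) (q : κ → ℝ≥0) (t : ℝ≥0) (R : ι → κ → Prop)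
    (h : ∀ (A : Finset ι) (B : Finset κ), (∀ i ∈ A, ∀ j, R i j → j ∈ B) →
      ∑ i ∈ A, p i ≤ ∑ j ∈ B, q j + t) {η : ℝ≥0} (hη : 0 < η) :
    ∃ w : ι → κ → ℝ≥0, (∀ i j, w i j ≠ 0 → R i j) ∧ (∀ i, ∑ j, w i j ≤ p i) ∧
      (∀ j, ∑ i, w i j ≤ q j) ∧ ∑ i, p i ≤ ∑ i, ∑ j, w i j + t + η := by
  -- scale by a large integer `N`, round down, and absorb the rounding errors into `η`
  obtain ⟨N, hN⟩ := exists_nat_gt ((Fintype.card ι + Fintype.card κ + 1) / η)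
  have hN₀ : (0 : ℝ≥0) < N := lt_of_le_of_lt zero_le hN
  rw [div_lt_iff₀ hη] at hN
  obtain ⟨M, hMR, hrow, hcol, htot⟩ := exists_nat_subtransport _ _ _ R fun A B hAB =>
    sum_floor_mul_le_sum_floor_mul_add N (h A B hAB)
  refine ⟨fun i j => M i j / N, fun i j hij => hMR i j (by simp_all), fun i => ?_, fun j => ?_, ?_⟩
  · rw [← Finset.sum_div, div_le_iff₀ hN₀, mul_comm]
    exact le_trans (by exact_mod_cast hrow i) (Nat.floor_le zero_le)
  · rw [← Finset.sum_div, div_le_iff₀ hN₀, mul_comm]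
    exact le_trans (by exact_mod_cast hcol j) (Nat.floor_le zero_le)
  have key : N * ∑ i, p i ≤ ∑ i, ∑ j, (M i j : ℝ≥0) + N * t + N * η :=
    calc N * ∑ i, p i ≤ ∑ i, ((⌊N * p i⌋₊ : ℝ≥0) + 1) := by
          rw [Finset.mul_sum]; gcongr with i; exact (Nat.lt_floor_add_one _).le
      _ = ∑ i, (⌊N * p i⌋₊ : ℝ≥0) + Fintype.card ι := by simp [Finset.sum_add_distrib]
      _ ≤ ∑ i, ∑ j, (M i j : ℝ≥0) + (⌈N * t⌉₊ + Fintype.card κ) + Fintype.card ι := by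
          gcongr; exact_mod_cast htot
      _ ≤ ∑ i, ∑ j, (M i j : ℝ≥0) + (N * t + 1 + Fintype.card κ) + Fintype.card ι := by
          gcongr; exact (Nat.ceil_lt_add_one zero_le).le
      _ = ∑ i, ∑ j, (M i j : ℝ≥0) + N * t + (Fintype.card ι + Fintype.card κ + 1) := by ring
      _ ≤ ∑ i, ∑ j, (M i j : ℝ≥0) + N * t + N * η := by gcongr
  refine le_of_mul_le_mul_left (key.trans_eq ?_) hN₀
  simp only [mul_add, Finset.mul_sum, mul_div_cancel₀ _ hN₀.ne']

end Transport

section Coupling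

variable {α β ι κ : Type*} [MeasurableSpace α] [MeasurableSpace β]

lemma ProbabilityTheory.measure_smul_cond_le (μ : Measure α) (s : Set α) :
    μ s • μ[|s] ≤ μ.restrict s := by
  rw [ProbabilityTheory.cond, smul_smul]
  calc _ ≤ (1 : ℝ≥0∞) • μ.restrict s := by gcongr; exact ENNReal.mul_inv_le_one _
    _ = _ := one_smul _ _

lemma ProbabilityTheory.prod_cond_compl_prod_eq_zero (μ : Measure α) (ν : Measure β) {s : Set α}
    {t : Set β} (hs : MeasurableSet s) (ht : MeasurableSet t) :
    (μ[|s]).prod (ν[|t]) (s ×ˢ t)ᶜ = 0 := by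
  refine mem_ae_iff.1 ((Measure.ae_prod_mem_iff_ae_ae_mem (hs.prod ht)).2 ?_)
  filter_upwards [ae_cond_mem hs] with x hx
  filter_upwards [ae_cond_mem ht] with y hy
  exact ⟨hx, hy⟩

lemma MeasureTheory.Measure.sum_restrict_le_self [Fintype ι] {μ : Measure α} {X : ι → Set α}
    (hX : ∀ i, MeasurableSet (X i)) (hXd : Pairwise (Disjoint on X)) :
    ∑ i, μ.restrict (X i) ≤ μ := by
  rw [← Measure.sum_fintype, ← Measure.restrict_iUnion hXd hX]
  exact Measure.restrict_le_self

lemma MeasureTheory.Measure.inv_measure_univ_mul_smul (μ : Measure α) [IsFiniteMeasure μ] :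
    ((μ univ)⁻¹ * μ univ) • μ = μ := by
  rcases eq_or_ne (μ univ) 0 with h | h
  · simp [Measure.measure_univ_eq_zero.1 h]
  · rw [ENNReal.inv_mul_cancel h (measure_ne_top _ _), one_smul]

theorem exists_coupling_le_add (μ : Measure α) (ν : Measure β) [IsFiniteMeasure μ]
    [IsFiniteMeasure ν] (hμν : μ univ = ν univ) (m₀ : Measure (α × β))
    (hfst : m₀.map Prod.fst ≤ μ) (hsnd : m₀.map Prod.snd ≤ ν) :
    ∃ m : Measure (α × β), m.map Prod.fst = μ ∧ m.map Prod.snd = ν ∧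
      ∀ E, m E ≤ m₀ E + (μ univ - m₀ univ) := by
  have hfst_univ : m₀.map Prod.fst univ = m₀ univ := Measure.fst_univ
  have hsnd_univ : m₀.map Prod.snd univ = m₀ univ := Measure.snd_univ
  have : IsFiniteMeasure m₀ :=
    ⟨by rw [← hfst_univ]; exact (hfst _).trans_lt (measure_lt_top μ _)⟩
  set μ' := μ - m₀.map Prod.fst
  set ν' := ν - m₀.map Prod.snd
  have hμ' : μ' univ = μ univ - m₀ univ := by
    rw [Measure.sub_apply .univ hfst, hfst_univ]
  have hν' : ν' univ = μ' univ := by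
    rw [Measure.sub_apply .univ hsnd, hsnd_univ, hμ', hμν]
  refine ⟨m₀ + (μ' univ)⁻¹ • μ'.prod ν', ?_, ?_, fun E => ?_⟩
  · rw [Measure.map_add _ _ measurable_fst, Measure.map_smul, Measure.map_fst_prod, smul_smul, hν',
      Measure.inv_measure_univ_mul_smul, add_comm, Measure.sub_add_cancel_of_le hfst]
  · rw [Measure.map_add _ _ measurable_snd, Measure.map_smul, Measure.map_snd_prod, smul_smul,
      ← hν', Measure.inv_measure_univ_mul_smul, add_comm, Measure.sub_add_cancel_of_le hsnd]
  · rw [Measure.add_apply, Measure.smul_apply, smul_eq_mul, ← hμ']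
    gcongr
    calc (μ' univ)⁻¹ * μ'.prod ν' E ≤ (μ' univ)⁻¹ * (μ' univ * ν' univ) := by
          gcongr
          rw [← Measure.prod_prod, univ_prod_univ]
          exact measure_mono (subset_univ _)
      _ = ((μ' univ)⁻¹ * μ' univ) * μ' univ := by rw [hν', mul_assoc]
      _ ≤ μ' univ := mul_le_of_le_one_left' (ENNReal.inv_mul_le_one _)

variable [Fintype ι] [Fintype κ]

noncomputable def blockMeasure (μ : Measure α) (ν : Measure β) (X : ι → Set α) (Y : κ → Set β)
    (w : ι → κ → ℝ≥0∞) : Measure (α × β) :=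
  ∑ i, ∑ j, w i j • (μ[|X i]).prod (ν[|Y j])

variable {μ : Measure α} {ν : Measure β} {X : ι → Set α} {Y : κ → Set β} {w : ι → κ → ℝ≥0∞}

lemma map_fst_blockMeasure_le (hX : ∀ i, MeasurableSet (X i)) (hXd : Pairwise (Disjoint on X))
    (hrow : ∀ i, ∑ j, w i j ≤ μ (X i)) : (blockMeasure μ ν X Y w).map Prod.fst ≤ μ :=
  calc (blockMeasure μ ν X Y w).map Prod.fst
      = ∑ i, ∑ j, (w i j * ν[|Y j] univ) • μ[|X i] := by
        simp [blockMeasure, Measure.map_finset_sum measurable_fst.aemeasurable, mul_smul]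
    _ ≤ ∑ i, (∑ j, w i j) • μ[|X i] := by
        simp only [Finset.sum_smul]
        gcongr with i _ j _
        exact mul_le_of_le_one_right' prob_le_one
    _ ≤ ∑ i, μ (X i) • μ[|X i] := by gcongr with i; exact hrow i
    _ ≤ ∑ i, μ.restrict (X i) := by gcongr with i; exact measure_smul_cond_le μ _
    _ ≤ μ := Measure.sum_restrict_le_self hX hXd

lemma map_snd_blockMeasure_le (hY : ∀ j, MeasurableSet (Y j)) (hYd : Pairwise (Disjoint on Y))
    (hcol : ∀ j, ∑ i, w i j ≤ ν (Y j)) : (blockMeasure μ ν X Y w).map Prod.snd ≤ ν :=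
  calc (blockMeasure μ ν X Y w).map Prod.snd
      = ∑ j, ∑ i, (w i j * μ[|X i] univ) • ν[|Y j] := by
        rw [Finset.sum_comm]
        simp [blockMeasure, Measure.map_finset_sum measurable_snd.aemeasurable, mul_smul]
    _ ≤ ∑ j, (∑ i, w i j) • ν[|Y j] := by
        simp only [Finset.sum_smul]
        gcongr with j _ i _
        exact mul_le_of_le_one_right' prob_le_one
    _ ≤ ∑ j, ν (Y j) • ν[|Y j] := by gcongr with j; exact hcol j
    _ ≤ ∑ j, ν.restrict (Y j) := by gcongr with j; exact measure_smul_cond_le ν _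
    _ ≤ ν := Measure.sum_restrict_le_self hY hYd

lemma blockMeasure_univ [IsFiniteMeasure μ] [IsFiniteMeasure ν]
    (hrow : ∀ i, ∑ j, w i j ≤ μ (X i)) (hcol : ∀ j, ∑ i, w i j ≤ ν (Y j)) :
    blockMeasure μ ν X Y w univ = ∑ i, ∑ j, w i j := by
  simp only [blockMeasure, Measure.coe_finsetSum, Finset.sum_apply, Measure.smul_apply,
    smul_eq_mul]
  refine Finset.sum_congr rfl fun i _ => Finset.sum_congr rfl fun j _ => ?_
  rcases eq_or_ne (w i j) 0 with hw | hw
  · simp [hw]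
  have hμX : μ (X i) ≠ 0 := ne_bot_of_le_ne_bot hw
    ((Finset.single_le_sum (fun _ _ => zero_le) (Finset.mem_univ j)).trans (hrow i))
  have hνY : ν (Y j) ≠ 0 := ne_bot_of_le_ne_bot hw
    ((Finset.single_le_sum (fun _ _ => zero_le) (Finset.mem_univ i)).trans (hcol j))
  have := cond_isProbabilityMeasure hμX
  have := cond_isProbabilityMeasure hνY
  simp

lemma blockMeasure_eq_zero (hX : ∀ i, MeasurableSet (X i)) (hY : ∀ j, MeasurableSet (Y j))
    {E : Set (α × β)} (hE : ∀ i j, w i j ≠ 0 → Disjoint E (X i ×ˢ Y j)) :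
    blockMeasure μ ν X Y w E = 0 := by
  simp only [blockMeasure, Measure.coe_finsetSum, Finset.sum_apply, Measure.smul_apply,
    smul_eq_mul]
  refine Finset.sum_eq_zero fun i _ => Finset.sum_eq_zero fun j _ => ?_
  rcases eq_or_ne (w i j) 0 with hw | hw
  · simp [hw]
  rw [measure_mono_null (hE i j hw).subset_compl_right
    (prod_cond_compl_prod_eq_zero μ ν (hX i) (hY j)), mul_zero]

/-- A finite, approximate form of Strassen's theorem. -/
theorem exists_coupling_of_forall_sum_le (μ : Measure α) (ν : Measure β) [IsFiniteMeasure μ]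
    [IsFiniteMeasure ν] (hμν : μ univ = ν univ) (hX : ∀ i, MeasurableSet (X i))
    (hXd : Pairwise (Disjoint on X)) (hY : ∀ j, MeasurableSet (Y j))
    (hYd : Pairwise (Disjoint on Y)) (R : ι → κ → Prop) {t : ℝ≥0∞} (ht : t ≠ ∞)
    (h : ∀ (A : Finset ι) (B : Finset κ), (∀ i ∈ A, ∀ j, R i j → j ∈ B) →
      ∑ i ∈ A, μ (X i) ≤ ∑ j ∈ B, ν (Y j) + t) {η : ℝ≥0∞} (hη : 0 < η) :
    ∃ m : Measure (α × β), m.map Prod.fst = μ ∧ m.map Prod.snd = ν ∧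
      ∀ E, (∀ i j, R i j → Disjoint E (X i ×ˢ Y j)) → m E ≤ μ (⋃ i, X i)ᶜ + t + η := by
  lift t to ℝ≥0 using ht
  obtain ⟨η', hη'₀, hη'⟩ := ENNReal.lt_iff_exists_nnreal_btwn.1 hη
  have hμX (i : ι) : ((μ (X i)).toNNReal : ℝ≥0∞) = μ (X i) := ENNReal.coe_toNNReal (by finiteness)
  have hνY (j : κ) : ((ν (Y j)).toNNReal : ℝ≥0∞) = ν (Y j) := ENNReal.coe_toNNReal (by finiteness)
  obtain ⟨w, hwR, hrow, hcol, htot⟩ := exists_nnreal_subtransport (fun i => (μ (X i)).toNNReal)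
    (fun j => (ν (Y j)).toNNReal) t R (fun A B hAB => by
      rw [← ENNReal.coe_le_coe]; push_cast; simp only [hμX, hνY]; exact h A B hAB)
    (ENNReal.coe_pos.1 hη'₀)
  have hrow' (i : ι) : ∑ j, (w i j : ℝ≥0∞) ≤ μ (X i) := by rw [← hμX]; exact_mod_cast hrow i
  have hcol' (j : κ) : ∑ i, (w i j : ℝ≥0∞) ≤ ν (Y j) := by rw [← hνY]; exact_mod_cast hcol j
  obtain ⟨m, hfst, hsnd, hm⟩ := exists_coupling_le_add μ ν hμν
    (blockMeasure μ ν X Y fun i j => w i j) (map_fst_blockMeasure_le hX hXd hrow')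
    (map_snd_blockMeasure_le hY hYd hcol')
  refine ⟨m, hfst, hsnd, fun E hE => ?_⟩
  have hμ_univ : μ univ = μ (⋃ i, X i)ᶜ + ∑ i, μ (X i) := by
    rw [← tsum_fintype (L := .unconditional _), ← measure_iUnion hXd hX, add_comm,
      measure_add_measure_compl (MeasurableSet.iUnion hX)]
  have htot' : ∑ i, μ (X i) ≤ ∑ i, ∑ j, (w i j : ℝ≥0∞) + t + η :=
    calc ∑ i, μ (X i) = ((∑ i, (μ (X i)).toNNReal : ℝ≥0) : ℝ≥0∞) := by push_cast; simp only [hμX]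
      _ ≤ ∑ i, ∑ j, (w i j : ℝ≥0∞) + t + η' := by exact_mod_cast htot
      _ ≤ _ := by gcongr
  calc m E ≤ _ + (μ univ - _) := hm E
    _ = μ univ - ∑ i, ∑ j, (w i j : ℝ≥0∞) := by
        rw [blockMeasure_eq_zero hX hY fun i j hw => hE i j (hwR i j (by simpa using hw)),
          blockMeasure_univ hrow' hcol', zero_add]
    _ ≤ μ (⋃ i, X i)ᶜ + t + η := by
        rw [tsub_le_iff_right, hμ_univ]
        calc μ (⋃ i, X i)ᶜ + ∑ i, μ (X i)
            ≤ μ (⋃ i, X i)ᶜ + (∑ i, ∑ j, (w i j : ℝ≥0∞) + t + η) := by gcongr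
          _ = _ := by ring

end Coupling

section Prokhorov

variable {S : Type*} [MetricSpace S]

lemma exists_forall_le_thickening_of_prokhorovDist_lt [MeasurableSpace S] {P Q : Measure S}
    [IsFiniteMeasure P] {ε : ℝ} (h : prokhorovDist P Q < ε) :
    ∃ δ < ε, 0 < δ ∧ ∀ A, MeasurableSet A → P A ≤ Q (thickening δ A) + ENNReal.ofReal δ := by
  have hne : {δ : ℝ | 0 < δ ∧ ∀ A : Set S, MeasurableSet A →
      P A ≤ Q (thickening δ A) + ENNReal.ofReal δ}.Nonempty := by
    refine ⟨(P univ).toReal + 1, by positivity, fun A _ => ?_⟩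
    calc P A ≤ P univ := measure_mono (subset_univ A)
      _ ≤ ENNReal.ofReal ((P univ).toReal + 1) :=
          ENNReal.le_ofReal_iff_toReal_le (by finiteness) (by positivity) |>.2 (by linarith)
      _ ≤ _ := le_add_self
  obtain ⟨δ, ⟨hδ, hPQ⟩, hδε⟩ := exists_lt_of_csInf_lt hne h
  exact ⟨δ, hδε, hδ, hPQ⟩

lemma sum_measure_le_of_forall_le_thickening [MeasurableSpace S] {P Q : Measure S} {δ : ℝ}
    {c : ℝ≥0∞} (hPQ : ∀ A, MeasurableSet A → P A ≤ Q (thickening δ A) + c) {ι : Type*}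
    {D : ι → Set S} (hD : ∀ i, MeasurableSet (D i)) (hDd : Pairwise (Disjoint on D))
    (A B : Finset ι) (hAB : ∀ i ∈ A, ∀ j, (∃ x ∈ D i, ∃ y ∈ D j, dist x y < δ) → j ∈ B) :
    ∑ i ∈ A, P (D i) ≤ ∑ j ∈ B, Q (D j) + (Q (⋃ i, D i)ᶜ + c) := by
  have hthick : thickening δ (⋃ i ∈ A, D i) ⊆ (⋃ i, D i)ᶜ ∪ ⋃ j ∈ B, D j := by
    intro y hy
    refine or_iff_not_imp_left.2 fun hyD => ?_
    obtain ⟨j, hj⟩ := mem_iUnion.1 (not_not.1 hyD)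
    obtain ⟨x, hx, hxy⟩ := mem_thickening_iff.1 hy
    obtain ⟨i, hi, hxi⟩ := mem_iUnion₂.1 hx
    exact mem_iUnion₂.2 ⟨j, hAB i hi j ⟨x, hxi, y, hj, by rwa [dist_comm]⟩, hj⟩
  calc ∑ i ∈ A, P (D i) = P (⋃ i ∈ A, D i) :=
        (measure_biUnion_finset (fun i _ j _ hij => hDd hij) fun i _ => hD i).symm
    _ ≤ Q (thickening δ (⋃ i ∈ A, D i)) + c :=
        hPQ _ (Finset.measurableSet_biUnion _ fun i _ => hD i)
    _ ≤ Q (⋃ i, D i)ᶜ + ∑ j ∈ B, Q (D j) + c := by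
        gcongr
        exact (measure_mono hthick).trans
          ((measure_union_le _ _).trans (add_le_add le_rfl (measure_biUnion_finset_le _ _)))
    _ = _ := by ring

lemma exists_fin_measurable_partition_dist_le [SecondCountableTopology S] [MeasurableSpace S]
    [OpensMeasurableSpace S] (μ : Measure S) [IsFiniteMeasure μ] {r : ℝ} (hr : 0 < r)
    {δ : ℝ≥0∞} (hδ : 0 < δ) :
    ∃ N, ∃ D : Fin N → Set S, (∀ i, MeasurableSet (D i)) ∧ Pairwise (Disjoint on D) ∧
      (∀ i, ∀ x ∈ D i, ∀ y ∈ D i, dist x y ≤ r) ∧ μ (⋃ i, D i)ᶜ < δ := by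
  obtain ⟨E, hE, hEb, hEdiam, hEcover, hEd⟩ :=
    SeparableSpace.exists_measurable_partition_diam_le S hr
  obtain ⟨N, hN⟩ := ((tendsto_measure_biUnion_Ici_zero_of_pairwise_disjoint (μ := μ)
    (fun n => (hE n).nullMeasurableSet) hEd).eventually (gt_mem_nhds hδ)).exists
  refine ⟨N, fun i => E i, fun i => hE i, fun i j hij => hEd (Fin.val_injective.ne hij),
    fun i x hx y hy => (dist_le_diam_of_mem (hEb i) hx hy).trans (hEdiam i),
    lt_of_le_of_lt (measure_mono fun x hx => ?_) hN⟩
  obtain ⟨n, hn⟩ := mem_iUnion.1 (hEcover ▸ mem_univ x)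
  exact mem_iUnion₂.2 ⟨n, not_lt.1 fun hlt => hx (mem_iUnion.2 ⟨⟨n, hlt⟩, hn⟩), hn⟩

lemma disjoint_setOf_le_dist_prod {s t : Set S} {r δ : ℝ}
    (hs : ∀ x ∈ s, ∀ y ∈ s, dist x y ≤ r) (ht : ∀ x ∈ t, ∀ y ∈ t, dist x y ≤ r)
    (hst : ∃ x ∈ s, ∃ y ∈ t, dist x y < δ) :
    Disjoint {p : S × S | r + δ + r ≤ dist p.1 p.2} (s ×ˢ t) := by
  obtain ⟨x₀, hx₀, y₀, hy₀, hxy₀⟩ := hst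
  rw [Set.disjoint_left]
  rintro ⟨x, y⟩ (hxy : r + δ + r ≤ dist x y) ⟨hx, hy⟩
  linarith [dist_triangle4 x x₀ y₀ y, hs x hx x₀ hx₀, ht y₀ hy₀ y hy]

end Prokhorov

theorem exists_coupling_of_prokhorovDist_lt_general
    {S : Type*} [MetricSpace S] [SecondCountableTopology S]
    [MeasurableSpace S] [BorelSpace S]
    (P Q : Measure S) [IsProbabilityMeasure P] [IsProbabilityMeasure Q]
    (ε : ℝ) (h : prokhorovDist P Q < ε) :
    ∃ m : Measure (S × S), IsProbabilityMeasure m ∧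
      m.map Prod.fst = P ∧ m.map Prod.snd = Q ∧
      m {p : S × S | ε ≤ dist p.1 p.2} ≤ ENNReal.ofReal ε := by
  obtain ⟨δ, hδε, hδ, hPQ⟩ := exists_forall_le_thickening_of_prokhorovDist_lt h
  obtain ⟨θ, hθ, hθε⟩ : ∃ θ, 0 < θ ∧ 2 * θ + δ + 2 * θ = ε := ⟨(ε - δ) / 4, by linarith, by ring⟩
  obtain ⟨N, D, hD, hDd, hDdist, hDc⟩ := exists_fin_measurable_partition_dist_le (P + Q)
    (r := 2 * θ) (by positivity) (δ := ENNReal.ofReal θ) (by simpa)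
  have hPc : P (⋃ i, D i)ᶜ ≤ ENNReal.ofReal θ := (le_add_right le_rfl).trans hDc.le
  have hQc : Q (⋃ i, D i)ᶜ ≤ ENNReal.ofReal θ := (le_add_left le_rfl).trans hDc.le
  obtain ⟨m, hfst, hsnd, hm⟩ := exists_coupling_of_forall_sum_le P Q (by simp) hD hDd hD hDd
    (fun i j => ∃ x ∈ D i, ∃ y ∈ D j, dist x y < δ) (t := ENNReal.ofReal θ + ENNReal.ofReal δ)
    (by finiteness) (fun A B hAB =>
      (sum_measure_le_of_forall_le_thickening hPQ hD hDd A B hAB).trans (by gcongr))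
    (η := ENNReal.ofReal θ) (by simpa)
  refine ⟨m, ⟨by rw [← Measure.fst_univ, Measure.fst, hfst, measure_univ]⟩, hfst, hsnd, ?_⟩
  calc m {p | ε ≤ dist p.1 p.2}
      ≤ P (⋃ i, D i)ᶜ + (ENNReal.ofReal θ + ENNReal.ofReal δ) + ENNReal.ofReal θ :=
        hm _ fun i j hij => hθε ▸ disjoint_setOf_le_dist_prod (hDdist i) (hDdist j) hij
    _ ≤ ENNReal.ofReal (θ + (θ + δ) + θ) := by
        rw [ENNReal.ofReal_add (by positivity) hθ.le, ENNReal.ofReal_add hθ.le (by positivity),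
          ENNReal.ofReal_add hθ.le hδ.le]
        gcongr
    _ ≤ ENNReal.ofReal ε := ENNReal.ofReal_le_ofReal (by linarith)

/-- If the Prokhorov distance between `P` and `Q` is less than `ε`, then there is a
coupling `m` of `P` and `Q` with `m {(x,y) : d(x,y) ≥ ε} ≤ ε`. -/
theorem exists_coupling_of_prokhorovDist_lt
    {S : Type*} [MetricSpace S] [CompleteSpace S] [SecondCountableTopology S]
    [MeasurableSpace S] [BorelSpace S]
    (P Q : Measure S) [IsProbabilityMeasure P] [IsProbabilityMeasure Q]
    (ε : ℝ) (h : prokhorovDist P Q < ε) :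
    ∃ m : Measure (S × S), IsProbabilityMeasure m ∧
      m.map Prod.fst = P ∧ m.map Prod.snd = Q ∧
      m {p : S × S | ε ≤ dist p.1 p.2} ≤ ENNReal.ofReal ε :=
  exists_coupling_of_prokhorovDist_lt_general P Q ε h
end

section
/- Let X, Y be Polish spaces. Metrize X × Y by d((x,y),(x',y')) = max(d_X(x,x'), d_Y(y,y')). Suppose μ, μ' ∈ P(X), ν, ν' ∈ P(Y), and π ∈ Π(μ,ν). Suppose v₁ is a coupling of (μ', μ) with v₁{(x,x') : d_X(x,x') ≥ ε} ≤ ε and v₂ is a coupling of (ν, ν') with v₂{(y,y') : d_Y(y,y') ≥ δ} ≤ δ. Then there exists π' ∈ Π(μ',ν') with Prokhorov distance d_P(π', π) ≤ ε + δ. -/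
/-!
Disintegrate `v₁` over its second coordinate and `v₂` over its first. Running the two
conditional kernels in parallel from a `π`-distributed point `(x, y)` yields `(x', y')` such that
`(x', x) ~ v₁`, `(x, y) ~ π` and `(y, y') ~ v₂`; the law `π'` of `(x', y')` then has marginals
`μ'`, `ν'`. In the sup metric `(x', y')` is `(ε + δ)`-far from `(x, y)` only if `x'` is `ε`-far
from `x` or `y'` is `δ`-far from `y`, which has probability at most `ε + δ`: this coupling of `π'`
and `π` bounds their Prokhorov distance.
-/

open MeasureTheory ProbabilityTheory
open scoped ENNReal

section Prokhorov

variable {S Ω : Type*} [MetricSpace S] [MeasurableSpace S] [MeasurableSpace Ω]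

lemma prokhorovDist_le {P Q : Measure S} {ε : ℝ} (hε : 0 < ε)
    (h : ∀ A, MeasurableSet A → P A ≤ Q (Metric.thickening ε A) + ENNReal.ofReal ε) :
    prokhorovDist P Q ≤ ε :=
  csInf_le ⟨0, fun _ hx => hx.1.le⟩ ⟨hε, h⟩

lemma prokhorovDist_map_le [OpensMeasurableSpace S] {ρ : Measure Ω} {f g : Ω → S}
    (hf : AEMeasurable f ρ) (hg : AEMeasurable g ρ) {ε : ℝ} (hε : 0 < ε)
    (hfar : ρ {ω | ε ≤ dist (f ω) (g ω)} ≤ ENNReal.ofReal ε) :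
    prokhorovDist (ρ.map f) (ρ.map g) ≤ ε := by
  refine prokhorovDist_le hε fun A hA => ?_
  have hcover : f ⁻¹' A ⊆ g ⁻¹' Metric.thickening ε A ∪ {ω | ε ≤ dist (f ω) (g ω)} := by
    intro ω hω
    by_cases hfarω : ε ≤ dist (f ω) (g ω)
    · exact Or.inr hfarω
    · exact Or.inl (Metric.mem_thickening_iff.2
        ⟨f ω, hω, by rw [dist_comm]; exact not_le.1 hfarω⟩)
  calc ρ.map f A = ρ (f ⁻¹' A) := Measure.map_apply_of_aemeasurable hf hA
    _ ≤ ρ (g ⁻¹' Metric.thickening ε A) + ρ {ω | ε ≤ dist (f ω) (g ω)} :=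
      (measure_mono hcover).trans (measure_union_le _ _)
    _ ≤ ρ.map g (Metric.thickening ε A) + ENNReal.ofReal ε := by
      rw [Measure.map_apply_of_aemeasurable hg Metric.isOpen_thickening.measurableSet]
      gcongr

end Prokhorov

lemma measure_add_le_dist_prod_le {Ω X Y : Type*} [MeasurableSpace Ω] [PseudoMetricSpace X]
    [PseudoMetricSpace Y] (ρ : Measure Ω) (f g : Ω → X × Y) (ε δ : ℝ) :
    ρ {ω | ε + δ ≤ dist (f ω) (g ω)} ≤
      ρ {ω | ε ≤ dist (f ω).1 (g ω).1} + ρ {ω | δ ≤ dist (f ω).2 (g ω).2} := by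
  refine (measure_mono fun ω hω => ?_).trans (measure_union_le _ _)
  by_contra hnear
  simp only [Set.mem_union, Set.mem_ofPred_eq, not_or, not_le] at hω hnear
  rw [Prod.dist_eq] at hω
  exact hω.not_gt (max_lt (by linarith [dist_nonneg (x := (f ω).2) (y := (g ω).2)])
    (by linarith [dist_nonneg (x := (f ω).1) (y := (g ω).1)]))

section Gluing

variable {X Y X' Y' : Type*} [MeasurableSpace X] [MeasurableSpace Y] [MeasurableSpace X']
  [MeasurableSpace Y']

lemma map_compProd_parallelComp_left (π : Measure (X × Y)) [SFinite π] (κ : Kernel X X')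
    (η : Kernel Y Y') [IsSFiniteKernel κ] [IsMarkovKernel η] :
    (π ⊗ₘ (κ ∥ₖ η)).map (fun p => (p.1.1, p.2.1)) = π.fst ⊗ₘ κ := by
  have hf : Measurable fun p : (X × Y) × (X' × Y') => (p.1.1, p.2.1) := by fun_prop
  ext s hs
  rw [Measure.map_apply hf hs, Measure.compProd_apply (hf hs), Measure.compProd_apply hs,
    Measure.fst, lintegral_map (Kernel.measurable_kernel_prodMk_left hs) measurable_fst]
  refine lintegral_congr fun p => ?_
  rw [show Prod.mk p ⁻¹' ((fun p => (p.1.1, p.2.1)) ⁻¹' s) = (Prod.mk p.1 ⁻¹' s) ×ˢ Set.univ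
    by ext; simp, Kernel.parallelComp_apply_prod, measure_univ, mul_one]

lemma map_compProd_parallelComp_right (π : Measure (X × Y)) [SFinite π] (κ : Kernel X X')
    (η : Kernel Y Y') [IsMarkovKernel κ] [IsSFiniteKernel η] :
    (π ⊗ₘ (κ ∥ₖ η)).map (fun p => (p.1.2, p.2.2)) = π.snd ⊗ₘ η := by
  have hf : Measurable fun p : (X × Y) × (X' × Y') => (p.1.2, p.2.2) := by fun_prop
  ext s hs
  rw [Measure.map_apply hf hs, Measure.compProd_apply (hf hs), Measure.compProd_apply hs,
    Measure.snd, lintegral_map (Kernel.measurable_kernel_prodMk_left hs) measurable_snd]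
  refine lintegral_congr fun p => ?_
  rw [show Prod.mk p ⁻¹' ((fun p => (p.1.2, p.2.2)) ⁻¹' s) = Set.univ ×ˢ (Prod.mk p.2 ⁻¹' s)
    by ext; simp, Kernel.parallelComp_apply_prod, measure_univ, one_mul]

theorem exists_gluing [StandardBorelSpace X'] [Nonempty X'] [StandardBorelSpace Y'] [Nonempty Y']
    (π : Measure (X × Y)) [IsProbabilityMeasure π] (v₁ : Measure (X' × X)) [IsFiniteMeasure v₁]
    (v₂ : Measure (Y × Y')) [IsFiniteMeasure v₂]
    (h₁ : v₁.map Prod.snd = π.map Prod.fst) (h₂ : v₂.map Prod.fst = π.map Prod.snd) :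
    ∃ γ : Measure ((X × Y) × (X' × Y')), IsProbabilityMeasure γ ∧ γ.map Prod.fst = π ∧
      γ.map (fun p => (p.2.1, p.1.1)) = v₁ ∧ γ.map (fun p => (p.1.2, p.2.2)) = v₂ := by
  refine ⟨π ⊗ₘ ((v₁.map Prod.swap).condKernel ∥ₖ v₂.condKernel), inferInstance, Measure.fst_compProd _ _, ?_, ?_⟩
  · have hfst : (v₁.map Prod.swap).fst = π.fst := by
      rw [Measure.fst, Measure.map_map measurable_fst measurable_swap]; exact h₁
    rw [show (fun p : (X × Y) × (X' × Y') => (p.2.1, p.1.1)) =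
        Prod.swap ∘ fun p => (p.1.1, p.2.1) from rfl,
      ← Measure.map_map measurable_swap (by fun_prop), map_compProd_parallelComp_left,
      ← hfst, Measure.disintegrate, Measure.map_map measurable_swap measurable_swap]
    simp
  · rw [map_compProd_parallelComp_right, Measure.snd, ← h₂]
    exact Measure.disintegrate _ _

end Gluing

theorem exists_coupling_close_general
    {X Y : Type*} [MetricSpace X] [CompleteSpace X] [SecondCountableTopology X]
    [MeasurableSpace X] [BorelSpace X]
    [MetricSpace Y] [CompleteSpace Y] [SecondCountableTopology Y]
    [MeasurableSpace Y] [BorelSpace Y]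
    (μ μ' : Measure X) (ν ν' : Measure Y)
    [IsProbabilityMeasure μ] [IsProbabilityMeasure ν]
    (π : Measure (X × Y)) [IsProbabilityMeasure π]
    (hπ : π.map Prod.fst = μ ∧ π.map Prod.snd = ν)
    (ε δ : ℝ) (hε : 0 < ε) (hδ : 0 < δ)
    (v₁ : Measure (X × X)) [IsProbabilityMeasure v₁]
    (hv₁ : v₁.map Prod.fst = μ' ∧ v₁.map Prod.snd = μ)
    (hv₁close : v₁ {p : X × X | ε ≤ dist p.1 p.2} ≤ ENNReal.ofReal ε)
    (v₂ : Measure (Y × Y)) [IsProbabilityMeasure v₂]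
    (hv₂ : v₂.map Prod.fst = ν ∧ v₂.map Prod.snd = ν')
    (hv₂close : v₂ {p : Y × Y | δ ≤ dist p.1 p.2} ≤ ENNReal.ofReal δ) :
    ∃ π' : Measure (X × Y), IsProbabilityMeasure π' ∧
      π'.map Prod.fst = μ' ∧ π'.map Prod.snd = ν' ∧
      prokhorovDist π' π ≤ ε + δ := by
  have : Nonempty X := nonempty_of_isProbabilityMeasure μ
  have : Nonempty Y := nonempty_of_isProbabilityMeasure ν
  obtain ⟨γ, hγ, hγπ, hγ₁, hγ₂⟩ :=
    exists_gluing π v₁ v₂ (hv₁.2.trans hπ.1.symm) (hv₂.1.trans hπ.2.symm)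
  have hfar₁ : γ {ω | ε ≤ dist ω.2.1 ω.1.1} ≤ ENNReal.ofReal ε :=
    (Measure.le_map_apply (by fun_prop) {p : X × X | ε ≤ dist p.1 p.2}).trans (hγ₁ ▸ hv₁close)
  have hfar₂ : γ {ω | δ ≤ dist ω.2.2 ω.1.2} ≤ ENNReal.ofReal δ := by
    rw [show {ω : (X × Y) × (X × Y) | δ ≤ dist ω.2.2 ω.1.2} =
      (fun ω => (ω.1.2, ω.2.2)) ⁻¹' {p : Y × Y | δ ≤ dist p.1 p.2} by ext; simp [dist_comm]]
    exact (Measure.le_map_apply (by fun_prop) _).trans (hγ₂ ▸ hv₂close)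
  refine ⟨γ.map Prod.snd, Measure.isProbabilityMeasure_map (by fun_prop), ?_, ?_, ?_⟩
  · rw [← hv₁.1, ← hγ₁, Measure.map_map measurable_fst measurable_snd,
      Measure.map_map measurable_fst (by fun_prop)]
    rfl
  · rw [← hv₂.2, ← hγ₂, Measure.map_map measurable_snd measurable_snd,
      Measure.map_map measurable_snd (by fun_prop)]
    rfl
  · rw [← hγπ]
    refine prokhorovDist_map_le (by fun_prop) (by fun_prop) (by positivity) ?_
    calc γ {ω | ε + δ ≤ dist ω.2 ω.1}
        ≤ γ {ω | ε ≤ dist ω.2.1 ω.1.1} + γ {ω | δ ≤ dist ω.2.2 ω.1.2} :=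
          measure_add_le_dist_prod_le γ Prod.snd Prod.fst ε δ
      _ ≤ ENNReal.ofReal (ε + δ) := by
          rw [ENNReal.ofReal_add hε.le hδ.le]; exact add_le_add hfar₁ hfar₂

/-- Given `π ∈ Π(μ,ν)`, a coupling `v₁` of `(μ',μ)` concentrated near the diagonal up to
`ε` and a coupling `v₂` of `(ν,ν')` concentrated near the diagonal up to `δ`, there is a
coupling `π' ∈ Π(μ',ν')` with Prokhorov distance at most `ε + δ` from `π`. -/
theorem exists_coupling_close
    {X Y : Type*} [MetricSpace X] [CompleteSpace X] [SecondCountableTopology X]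
    [MeasurableSpace X] [BorelSpace X]
    [MetricSpace Y] [CompleteSpace Y] [SecondCountableTopology Y]
    [MeasurableSpace Y] [BorelSpace Y]
    (μ μ' : Measure X) (ν ν' : Measure Y)
    [IsProbabilityMeasure μ] [IsProbabilityMeasure μ']
    [IsProbabilityMeasure ν] [IsProbabilityMeasure ν']
    (π : Measure (X × Y)) [IsProbabilityMeasure π]
    (hπ : π.map Prod.fst = μ ∧ π.map Prod.snd = ν)
    (ε δ : ℝ) (hε : 0 < ε) (hδ : 0 < δ)
    (v₁ : Measure (X × X)) [IsProbabilityMeasure v₁]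
    (hv₁ : v₁.map Prod.fst = μ' ∧ v₁.map Prod.snd = μ)
    (hv₁close : v₁ {p : X × X | ε ≤ dist p.1 p.2} ≤ ENNReal.ofReal ε)
    (v₂ : Measure (Y × Y)) [IsProbabilityMeasure v₂]
    (hv₂ : v₂.map Prod.fst = ν ∧ v₂.map Prod.snd = ν')
    (hv₂close : v₂ {p : Y × Y | δ ≤ dist p.1 p.2} ≤ ENNReal.ofReal δ) :
    ∃ π' : Measure (X × Y), IsProbabilityMeasure π' ∧
      π'.map Prod.fst = μ' ∧ π'.map Prod.snd = ν' ∧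
      prokhorovDist π' π ≤ ε + δ :=
  exists_coupling_close_general μ μ' ν ν' π hπ ε δ hε hδ v₁ hv₁ hv₁close v₂ hv₂ hv₂close
end

section
/- (Lower hemicontinuity of the coupling correspondence) Let X, Y be Polish spaces, μₙ → μ weakly in P(X), νₙ → ν weakly in P(Y), and π ∈ Π(μ,ν). Then there exist πₙ ∈ Π(μₙ,νₙ) with πₙ → π weakly in P(X × Y). -/
/-!
Partition `X` and `Y` into countably many `μ`- resp. `ν`-continuity sets of diameter at most `η`;
finitely many rectangles `Bᵢ ×ˢ Cⱼ` then carry all but `η` of the mass of `π`. The sub-coupling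
`∑ π (Bᵢ ×ˢ Cⱼ) • (μₙ|Bᵢ / max (μ Bᵢ) (μₙ Bᵢ)) ⊗ (νₙ|Cⱼ / max (ν Cⱼ) (νₙ Cⱼ))` has marginals
below `μₙ` and `νₙ`, and since `μₙ Bᵢ → μ Bᵢ` and `νₙ Cⱼ → ν Cⱼ` it eventually keeps almost all of
the mass `π` puts on each rectangle. Completing it to a coupling of `μₙ` and `νₙ` gives, for large
`n`, couplings within Lévy–Prokhorov distance `η` of `π`. Nearly optimal choices for every `n`
converge to `π` because the Lévy–Prokhorov metric metrizes weak convergence on separable spaces.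
-/

open MeasureTheory Filter Set Metric Topology TopologicalSpace Function
open scoped ENNReal

theorem ENNReal.div_max_le_one (a b : ℝ≥0∞) : b / max a b ≤ 1 :=
  ENNReal.div_le_of_le_mul (by rw [one_mul]; exact le_max_right _ _)

theorem ENNReal.tendsto_div_max_of_tendsto {α : Type*} {l : Filter α} {f : α → ℝ≥0∞}
    {a : ℝ≥0∞} (hf : Tendsto f l (𝓝 a)) (ha : a ≠ 0) (ha' : a ≠ ∞) :
    Tendsto (fun x => f x / max a (f x)) l (𝓝 1) := by
  have : Tendsto (fun x => f x / max a (f x)) l (𝓝 (a / max a a)) :=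
    ENNReal.Tendsto.div hf (.inl ha) (tendsto_const_nhds.max hf) (.inr ha')
  rwa [max_self, ENNReal.div_self ha ha'] at this

theorem ENNReal.tendsto_mul_div_max_mul_div_max {α : Type*} {l : Filter α} {f g : α → ℝ≥0∞}
    {a b c : ℝ≥0∞} (hf : Tendsto f l (𝓝 a)) (hg : Tendsto g l (𝓝 b)) (hca : c ≤ a) (hcb : c ≤ b)
    (ha : a ≠ ∞) (hb : b ≠ ∞) :
    Tendsto (fun x => c * (f x / max a (f x) * (g x / max b (g x)))) l (𝓝 c) := by
  by_cases hc : c = 0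
  · simp only [hc, zero_mul, tendsto_const_nhds]
  have hfg := ENNReal.Tendsto.mul
    (ENNReal.tendsto_div_max_of_tendsto hf (ne_bot_of_le_ne_bot hc hca) ha)
    (.inr ENNReal.one_ne_top)
    (ENNReal.tendsto_div_max_of_tendsto hg (ne_bot_of_le_ne_bot hc hcb) hb)
    (.inr ENNReal.one_ne_top)
  simpa using ENNReal.Tendsto.const_mul hfg (.inr (ne_top_of_le_ne_top ha hca))

theorem ediam_prod_le {X Y : Type*} [PseudoEMetricSpace X] [PseudoEMetricSpace Y]
    (s : Set X) (t : Set Y) : ediam (s ×ˢ t) ≤ max (ediam s) (ediam t) :=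
  ediam_le fun _ hp _ hq => by
    rw [Prod.edist_eq]
    exact max_le_max (edist_le_ediam_of_mem hp.1 hq.1) (edist_le_ediam_of_mem hp.2 hq.2)

theorem Pairwise.disjoint_prod {ι κ X Y : Type*} {B : ι → Set X} {C : κ → Set Y}
    (hB : Pairwise (Disjoint on B)) (hC : Pairwise (Disjoint on C)) :
    Pairwise (Disjoint on fun p : ι × κ => B p.1 ×ˢ C p.2) := by
  rintro ⟨i, j⟩ ⟨i', j'⟩ hne
  by_cases hii : i = i'
  · subst hii
    exact Set.disjoint_prod.mpr (.inr (hC fun h => hne (Prod.ext rfl h)))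
  · exact Set.disjoint_prod.mpr (.inl (hB hii))

theorem exists_seq_forall_mem_tendsto_of_eventually_edist_le {α : Type*} [PseudoEMetricSpace α]
    {S : ℕ → Set α} (hS : ∀ n, (S n).Nonempty) {x : α}
    (h : ∀ ε > 0, ∀ᶠ n in atTop, ∃ y ∈ S n, edist y x ≤ ε) :
    ∃ y : ℕ → α, (∀ n, y n ∈ S n) ∧ Tendsto y atTop (𝓝 x) := by
  have hd : Tendsto (fun n => infEDist x (S n)) atTop (𝓝 0) :=
    ENNReal.tendsto_nhds_zero.mpr fun ε hε => (h ε hε).mono fun _ ⟨y, hy, hyx⟩ =>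
      (infEDist_le_edist_of_mem hy).trans (edist_comm x y ▸ hyx)
  have hnear : ∀ n, ∃ y ∈ S n, edist y x ≤ infEDist x (S n) + (n : ℝ≥0∞)⁻¹ := by
    intro n
    by_cases hn : infEDist x (S n) = ∞
    · obtain ⟨y, hy⟩ := hS n
      exact ⟨y, hy, by simp [hn]⟩
    · obtain ⟨y, hy, hyx⟩ := infEDist_lt_iff.mp
        (ENNReal.lt_add_right hn (ENNReal.inv_ne_zero.mpr (ENNReal.natCast_ne_top n)))
      exact ⟨y, hy, edist_comm x y ▸ hyx.le⟩
  choose y hyS hyx using hnear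
  refine ⟨y, hyS, tendsto_iff_edist_tendsto_0.mpr ?_⟩
  refine tendsto_of_tendsto_of_tendsto_of_le_of_le tendsto_const_nhds ?_ (fun _ => zero_le) hyx
  simpa using hd.add ENNReal.tendsto_inv_nat_nhds_zero

section Partition

theorem frontier_iUnion₂_lt_nat_subset {X : Type*} [TopologicalSpace X] (f : ℕ → Set X)
    (n : ℕ) : frontier (⋃ m < n, f m) ⊆ ⋃ m < n, frontier (f m) := by
  rintro x ⟨hcl, hint⟩
  rw [closure_iUnion₂_lt_nat, mem_iUnion₂] at hcl
  obtain ⟨m, hm, hx⟩ := hcl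
  exact mem_iUnion₂.mpr ⟨m, hm, hx, fun h =>
    hint (interior_mono (subset_iUnion₂ (s := fun m (_ : m < n) => f m) m hm) h)⟩

theorem frontier_disjointed_subset {X : Type*} [TopologicalSpace X] (f : ℕ → Set X) (n : ℕ) :
    frontier (disjointed f n) ⊆ ⋃ m, frontier (f m) := by
  rw [disjointed_eq_inter_compl, ← compl_iUnion₂]
  refine (frontier_inter_subset _ _).trans (union_subset ?_ ?_)
  · exact inter_subset_left.trans (subset_iUnion (fun m => frontier (f m)) n)
  · rw [frontier_compl]
    exact inter_subset_right.trans ((frontier_iUnion₂_lt_nat_subset f n).trans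
      (iUnion₂_subset fun m _ => subset_iUnion (fun m => frontier (f m)) m))

variable {X : Type*} [PseudoMetricSpace X] [SeparableSpace X] [MeasurableSpace X]
  [OpensMeasurableSpace X]

theorem SeparableSpace.exists_measurable_partition_ediam_le_null_frontier (μ : Measure X)
    [SFinite μ] {η : ℝ≥0∞} (hη : 0 < η) :
    ∃ B : ℕ → Set X, (∀ i, MeasurableSet (B i)) ∧ Pairwise (Disjoint on B) ∧
      ⋃ i, B i = univ ∧ (∀ i, ediam (B i) ≤ η) ∧ ∀ i, μ (frontier (B i)) = 0 := by
  cases isEmpty_or_nonempty X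
  · exact ⟨fun _ => ∅, fun _ => .empty, fun _ _ _ => disjoint_bot_left,
      eq_univ_of_forall isEmptyElim, fun _ => by simp, fun _ => by simp⟩
  obtain ⟨x, hx⟩ := exists_dense_seq X
  obtain ⟨d, -, hd0, hdη⟩ := ENNReal.lt_iff_exists_real_btwn.mp hη
  have hd : 0 < d := ENNReal.ofReal_pos.mp hd0
  have hradius : ∀ i, ∃ r ∈ Ioo (d / 4) (d / 2), μ (frontier (ball (x i) r)) = 0 := fun i => by
    simpa only [thickening_singleton] using
      exists_null_frontier_thickening μ {x i} (by linarith : d / 4 < d / 2)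
  choose r hr hr0 using hradius
  refine ⟨disjointed fun i => ball (x i) (r i), .disjointed fun _ => measurableSet_ball,
    disjoint_disjointed _, ?_, fun i => ?_, fun i => ?_⟩
  · rw [iUnion_disjointed]
    refine eq_univ_of_forall fun p => ?_
    obtain ⟨i, hi⟩ := Metric.denseRange_iff.mp hx p (d / 4) (by positivity)
    exact mem_iUnion.mpr ⟨i, mem_ball.mpr (hi.trans (hr i).1)⟩
  · refine (ediam_le_of_forall_dist_le fun p hp q hq => ?_).trans hdη.le
    have hp' := mem_ball.mp (disjointed_subset _ i hp)
    have hq' := mem_ball.mp (disjointed_subset _ i hq)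
    linarith [dist_triangle_right p q (x i), (hr i).2]
  · exact measure_mono_null (frontier_disjointed_subset _ i) (measure_iUnion_null hr0)

end Partition

theorem exists_finset_measure_univ_lt_sum_add {Z ι : Type*} [MeasurableSpace Z] [Countable ι]
    {π : Measure Z} [IsFiniteMeasure π] {cell : ι → Set Z}
    (hmeas : ∀ i, MeasurableSet (cell i)) (hdisj : Pairwise (Disjoint on cell))
    (hcover : ⋃ i, cell i = univ) {η : ℝ≥0∞} (hη : 0 < η) :
    ∃ s : Finset ι, π univ < ∑ i ∈ s, π (cell i) + η := by
  by_contra! h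
  have : π univ + η ≤ π univ :=
    calc π univ + η = (⨆ s : Finset ι, ∑ i ∈ s, π (cell i)) + η := by
          rw [← ENNReal.tsum_eq_iSup_sum, ← measure_iUnion hdisj hmeas, hcover]
      _ ≤ π univ := by
          rw [ENNReal.iSup_add]
          exact iSup_le h
  exact (ENNReal.lt_add_right (measure_ne_top π univ) hη.ne').not_ge this

section LevyProkhorovCells

variable {Z ι : Type*} [PseudoEMetricSpace Z] [MeasurableSpace Z]
  {s : Finset ι} {cell : ι → Set Z}

theorem measure_le_measure_thickening_add_of_sum_min_cells
    (hmeas : ∀ i ∈ s, MeasurableSet (cell i)) (hdisj : (s : Set ι).PairwiseDisjoint cell)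
    {r : ℝ} (hdiam : ∀ i ∈ s, ediam (cell i) < ENNReal.ofReal r)
    {μ ν : Measure Z} [IsFiniteMeasure μ] {η : ℝ≥0∞}
    (hμ : μ univ ≤ ∑ i ∈ s, min (μ (cell i)) (ν (cell i)) + η) (E : Set Z) :
    μ E ≤ ν (thickening r E) + η := by
  classical
  set T := s.filter fun i => (cell i ∩ E).Nonempty
  set R := ⋃ i ∈ s.filter (fun i => ¬(cell i ∩ E).Nonempty), cell i
  have hRmeas : MeasurableSet R :=
    Finset.measurableSet_biUnion _ fun i hi => hmeas i (Finset.mem_filter.mp hi).1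
  have hER : Disjoint E R := by
    refine Set.disjoint_iUnion₂_right.mpr fun i hi => ?_
    rw [Set.disjoint_iff_inter_eq_empty, Set.inter_comm, ← Set.not_nonempty_iff_eq_empty]
    exact (Finset.mem_filter.mp hi).2
  have hT : ⋃ i ∈ T, cell i ⊆ thickening r E := by
    refine Set.iUnion₂_subset fun i hi z hz => ?_
    obtain ⟨his, w, hwi, hwE⟩ := Finset.mem_filter.mp hi
    exact (mem_thickening_iff_exists_edist_lt _ _).mpr
      ⟨w, hwE, (edist_le_ediam_of_mem hz hwi).trans_lt (hdiam i his)⟩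
  have hsum : ∑ i ∈ s, min (μ (cell i)) (ν (cell i)) ≤ ν (thickening r E) + μ R := by
    rw [← Finset.sum_filter_add_sum_filter_not s fun i => (cell i ∩ E).Nonempty]
    gcongr
    · calc ∑ i ∈ T, min (μ (cell i)) (ν (cell i))
          ≤ ∑ i ∈ T, ν (cell i) := Finset.sum_le_sum fun i _ => min_le_right _ _
        _ = ν (⋃ i ∈ T, cell i) :=
          (measure_biUnion_finset (hdisj.subset (Finset.coe_subset.mpr (Finset.filter_subset _ _)))
            fun i hi => hmeas i (Finset.mem_filter.mp hi).1).symm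
        _ ≤ ν (thickening r E) := measure_mono hT
    · calc ∑ i ∈ s.filter (fun i => ¬(cell i ∩ E).Nonempty), min (μ (cell i)) (ν (cell i))
          ≤ ∑ i ∈ s.filter (fun i => ¬(cell i ∩ E).Nonempty), μ (cell i) :=
            Finset.sum_le_sum fun i _ => min_le_left _ _
        _ = μ R :=
          (measure_biUnion_finset (hdisj.subset (Finset.coe_subset.mpr (Finset.filter_subset _ _)))
            fun i hi => hmeas i (Finset.mem_filter.mp hi).1).symm
  refine (ENNReal.add_le_add_iff_right (measure_ne_top μ R)).mp ?_
  calc μ E + μ R = μ (E ∪ R) := (measure_union hER hRmeas).symm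
    _ ≤ μ univ := measure_mono (subset_univ _)
    _ ≤ ν (thickening r E) + μ R + η := hμ.trans (by gcongr)
    _ = ν (thickening r E) + η + μ R := add_right_comm _ _ _

theorem levyProkhorovEDist_le_of_sum_min_cells
    (hmeas : ∀ i ∈ s, MeasurableSet (cell i)) (hdisj : (s : Set ι).PairwiseDisjoint cell)
    {η : ℝ≥0∞} (hdiam : ∀ i ∈ s, ediam (cell i) ≤ η)
    {μ ν : Measure Z} [IsFiniteMeasure μ] [IsFiniteMeasure ν]
    (hμ : μ univ ≤ ∑ i ∈ s, min (μ (cell i)) (ν (cell i)) + η)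
    (hν : ν univ ≤ ∑ i ∈ s, min (μ (cell i)) (ν (cell i)) + η) :
    levyProkhorovEDist μ ν ≤ η := by
  refine levyProkhorovEDist_le_of_forall μ ν η fun ε E hηε hε _ => ?_
  have hdiam' : ∀ i ∈ s, ediam (cell i) < ENNReal.ofReal ε.toReal := fun i hi => by
    rw [ENNReal.ofReal_toReal hε.ne]
    exact (hdiam i hi).trans_lt hηε
  simp_rw [min_comm (μ _)] at hν
  exact ⟨(measure_le_measure_thickening_add_of_sum_min_cells hmeas hdisj hdiam' hμ E).trans
      (by gcongr),
    (measure_le_measure_thickening_add_of_sum_min_cells hmeas hdisj hdiam' hν E).trans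
      (by gcongr)⟩

end LevyProkhorovCells

section Couplings

variable {X Y : Type*} [MeasurableSpace X] [MeasurableSpace Y]

theorem MeasureTheory.Measure.inv_mul_measure_univ_smul_self (μ : Measure X)
    [IsFiniteMeasure μ] : ((μ univ)⁻¹ * μ univ) • μ = μ := by
  by_cases hμ : μ univ = 0
  · rw [Measure.measure_univ_eq_zero.mp hμ, smul_zero]
  · rw [ENNReal.inv_mul_cancel hμ (measure_ne_top μ univ), one_smul]

theorem MeasureTheory.Measure.exists_coupling_ge {μ : Measure X} {ν : Measure Y}
    [IsFiniteMeasure μ] [IsFiniteMeasure ν] (hμν : μ univ = ν univ) {γ : Measure (X × Y)}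
    (hγμ : γ.map Prod.fst ≤ μ) (hγν : γ.map Prod.snd ≤ ν) :
    ∃ ρ : Measure (X × Y), ρ.map Prod.fst = μ ∧ ρ.map Prod.snd = ν ∧ γ ≤ ρ := by
  have := isFiniteMeasure_of_le μ hγμ
  have := isFiniteMeasure_of_le ν hγν
  set μ' := μ - γ.map Prod.fst
  set ν' := ν - γ.map Prod.snd
  have hμν' : ν' univ = μ' univ := by
    rw [Measure.sub_apply .univ hγμ, Measure.sub_apply .univ hγν, hμν,
      Measure.map_apply measurable_fst .univ, Measure.map_apply measurable_snd .univ,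
      preimage_univ, preimage_univ]
  -- the two marginal defects have the same mass, so their normalized product fills them both
  refine ⟨γ + (μ' univ)⁻¹ • μ'.prod ν', ?_, ?_, Measure.le_add_right le_rfl⟩
  · rw [Measure.map_add _ _ measurable_fst, Measure.map_smul, Measure.map_fst_prod, hμν',
      smul_smul, μ'.inv_mul_measure_univ_smul_self, add_comm, Measure.sub_add_cancel_of_le hγμ]
  · rw [Measure.map_add _ _ measurable_snd, Measure.map_smul, Measure.map_snd_prod, ← hμν',
      smul_smul, ν'.inv_mul_measure_univ_smul_self, add_comm, Measure.sub_add_cancel_of_le hγν]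

namespace MeasureTheory.Measure

/-- `μ` restricted to `s` and divided by `max a (μ s)`: `a` times it stays below `μ.restrict s`,
while its mass `μ s / max a (μ s)` is close to `1` when `μ s` is close to `a ∈ (0, ∞)`. -/
noncomputable def restrictDivMax (μ : Measure X) (s : Set X) (a : ℝ≥0∞) : Measure X :=
  (max a (μ s))⁻¹ • μ.restrict s

variable {μ : Measure X} {s t : Set X} {a : ℝ≥0∞}

theorem restrictDivMax_apply (ht : MeasurableSet t) :
    μ.restrictDivMax s a t = μ (t ∩ s) / max a (μ s) := by
  rw [restrictDivMax, smul_apply, restrict_apply ht, smul_eq_mul, ENNReal.div_eq_inv_mul]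

theorem restrictDivMax_univ_le_one : μ.restrictDivMax s a univ ≤ 1 := by
  rw [restrictDivMax_apply .univ, univ_inter]
  exact ENNReal.div_max_le_one _ _

instance : IsFiniteMeasure (μ.restrictDivMax s a) :=
  ⟨restrictDivMax_univ_le_one.trans_lt ENNReal.one_lt_top⟩

theorem mul_restrictDivMax_apply_le (ht : MeasurableSet t) :
    a * μ.restrictDivMax s a t ≤ μ (t ∩ s) := by
  rw [restrictDivMax_apply ht, ENNReal.div_eq_inv_mul, ← mul_assoc, ← div_eq_mul_inv]
  exact mul_le_of_le_one_left' (max_comm a (μ s) ▸ ENNReal.div_max_le_one _ _)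

end MeasureTheory.Measure

variable {ι κ : Type*}

theorem sum_measure_prod_le_map_fst_apply {π : Measure (X × Y)} {t : Finset κ}
    {C : κ → Set Y} (hC : ∀ j, MeasurableSet (C j)) (hCd : (t : Set κ).PairwiseDisjoint C)
    {A : Set X} (hA : MeasurableSet A) :
    ∑ j ∈ t, π (A ×ˢ C j) ≤ π.map Prod.fst A := by
  rw [← measure_biUnion_finset (fun i hi j hj hij => disjoint_prod.mpr (.inr (hCd hi hj hij)))
    fun j _ => hA.prod (hC j), Measure.map_apply measurable_fst hA]
  exact measure_mono (iUnion₂_subset fun j _ => prod_subset_preimage_fst _ _)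

theorem sum_measure_prod_le_map_snd_apply {π : Measure (X × Y)} {s : Finset ι}
    {B : ι → Set X} (hB : ∀ i, MeasurableSet (B i)) (hBd : (s : Set ι).PairwiseDisjoint B)
    {A : Set Y} (hA : MeasurableSet A) :
    ∑ i ∈ s, π (B i ×ˢ A) ≤ π.map Prod.snd A := by
  rw [← measure_biUnion_finset (fun i hi j hj hij => disjoint_prod.mpr (.inl (hBd hi hj hij)))
    fun i _ => (hB i).prod hA, Measure.map_apply measurable_snd hA]
  exact measure_mono (iUnion₂_subset fun i _ => prod_subset_preimage_snd _ _)

theorem sum_mul_restrictDivMax_le {μ μ' : Measure X} {s : Finset ι} {B : ι → Set X}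
    (hB : ∀ i, MeasurableSet (B i)) (hBd : (s : Set ι).PairwiseDisjoint B) {w : ι → ℝ≥0∞}
    (hw : ∀ i ∈ s, w i ≤ μ (B i)) {E : Set X} (hE : MeasurableSet E) :
    ∑ i ∈ s, w i * μ'.restrictDivMax (B i) (μ (B i)) E ≤ μ' E := by
  calc ∑ i ∈ s, w i * μ'.restrictDivMax (B i) (μ (B i)) E
      ≤ ∑ i ∈ s, μ (B i) * μ'.restrictDivMax (B i) (μ (B i)) E := by
        gcongr with i hi
        exact hw i hi
    _ ≤ ∑ i ∈ s, μ' (E ∩ B i) := by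
        gcongr
        exact Measure.mul_restrictDivMax_apply_le hE
    _ = μ' (⋃ i ∈ s, E ∩ B i) :=
      (measure_biUnion_finset (fun i hi j hj hij => (hBd hi hj hij).mono inter_subset_right
        inter_subset_right) fun i _ => hE.inter (hB i)).symm
    _ ≤ μ' E := measure_mono (iUnion₂_subset fun _ _ => inter_subset_left)

theorem exists_subcoupling_on_rectangles {π : Measure (X × Y)} {μ μ' : Measure X}
    {ν ν' : Measure Y} (hπμ : π.map Prod.fst = μ) (hπν : π.map Prod.snd = ν)
    {s : Finset ι} {t : Finset κ} {B : ι → Set X} {C : κ → Set Y}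
    (hB : ∀ i, MeasurableSet (B i)) (hC : ∀ j, MeasurableSet (C j))
    (hBd : (s : Set ι).PairwiseDisjoint B) (hCd : (t : Set κ).PairwiseDisjoint C) :
    ∃ γ : Measure (X × Y), γ.map Prod.fst ≤ μ' ∧ γ.map Prod.snd ≤ ν' ∧ ∀ i ∈ s, ∀ j ∈ t,
      π (B i ×ˢ C j) * (μ' (B i) / max (μ (B i)) (μ' (B i)) *
        (ν' (C j) / max (ν (C j)) (ν' (C j)))) ≤ γ (B i ×ˢ C j) := by
  set α := fun i => μ'.restrictDivMax (B i) (μ (B i))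
  set β := fun j => ν'.restrictDivMax (C j) (ν (C j))
  set γ := ∑ i ∈ s, ∑ j ∈ t, π (B i ×ˢ C j) • (α i).prod (β j)
  have hγ : ∀ E F, γ (E ×ˢ F) = ∑ i ∈ s, ∑ j ∈ t, π (B i ×ˢ C j) * (α i E * β j F) := by
    intro E F
    simp only [γ, Measure.coe_finsetSum, Finset.sum_apply, Measure.smul_apply,
      Measure.prod_prod, smul_eq_mul]
  refine ⟨γ, Measure.le_iff.mpr fun E hE => ?_, Measure.le_iff.mpr fun F hF => ?_,
    fun i hi j hj => ?_⟩
  · rw [Measure.map_apply measurable_fst hE, ← prod_univ, hγ]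
    calc ∑ i ∈ s, ∑ j ∈ t, π (B i ×ˢ C j) * (α i E * β j univ)
        ≤ ∑ i ∈ s, (∑ j ∈ t, π (B i ×ˢ C j)) * α i E := by
          simp_rw [Finset.sum_mul]
          gcongr
          exact mul_le_of_le_one_right' Measure.restrictDivMax_univ_le_one
      _ ≤ μ' E := sum_mul_restrictDivMax_le hB hBd
          (fun i _ => hπμ ▸ sum_measure_prod_le_map_fst_apply hC hCd (hB i)) hE
  · rw [Measure.map_apply measurable_snd hF, ← univ_prod, hγ, Finset.sum_comm]
    calc ∑ j ∈ t, ∑ i ∈ s, π (B i ×ˢ C j) * (α i univ * β j F)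
        ≤ ∑ j ∈ t, (∑ i ∈ s, π (B i ×ˢ C j)) * β j F := by
          simp_rw [Finset.sum_mul]
          gcongr
          exact mul_le_of_le_one_left' Measure.restrictDivMax_univ_le_one
      _ ≤ ν' F := sum_mul_restrictDivMax_le hC hCd
          (fun j _ => hπν ▸ sum_measure_prod_le_map_snd_apply hB hBd (hC j)) hF
  calc π (B i ×ˢ C j) * (μ' (B i) / max (μ (B i)) (μ' (B i)) *
        (ν' (C j) / max (ν (C j)) (ν' (C j))))
      = π (B i ×ˢ C j) * (α i (B i) * β j (C j)) := by
        simp only [α, β, Measure.restrictDivMax_apply (hB i), Measure.restrictDivMax_apply (hC j),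
          inter_self]
    _ ≤ ∑ j' ∈ t, π (B i ×ˢ C j') * (α i (B i) * β j' (C j)) :=
        Finset.single_le_sum (f := fun j' => π (B i ×ˢ C j') * (α i (B i) * β j' (C j)))
          (fun _ _ => zero_le) hj
    _ ≤ ∑ i' ∈ s, ∑ j' ∈ t, π (B i' ×ˢ C j') * (α i' (B i) * β j' (C j)) :=
        Finset.single_le_sum
          (f := fun i' => ∑ j' ∈ t, π (B i' ×ˢ C j') * (α i' (B i) * β j' (C j)))
          (fun _ _ => zero_le) hi
    _ = γ (B i ×ˢ C j) := (hγ _ _).symm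

theorem exists_coupling_ge_on_rectangles {π : Measure (X × Y)} {μ μ' : Measure X}
    {ν ν' : Measure Y} (hπμ : π.map Prod.fst = μ) (hπν : π.map Prod.snd = ν)
    [IsFiniteMeasure μ'] [IsFiniteMeasure ν'] (hμν' : μ' univ = ν' univ)
    {s : Finset ι} {t : Finset κ} {B : ι → Set X} {C : κ → Set Y}
    (hB : ∀ i, MeasurableSet (B i)) (hC : ∀ j, MeasurableSet (C j))
    (hBd : (s : Set ι).PairwiseDisjoint B) (hCd : (t : Set κ).PairwiseDisjoint C) :
    ∃ ρ : Measure (X × Y), ρ.map Prod.fst = μ' ∧ ρ.map Prod.snd = ν' ∧ ∀ i ∈ s, ∀ j ∈ t,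
      π (B i ×ˢ C j) * (μ' (B i) / max (μ (B i)) (μ' (B i)) *
        (ν' (C j) / max (ν (C j)) (ν' (C j)))) ≤ ρ (B i ×ˢ C j) := by
  obtain ⟨γ, hγμ, hγν, hγ⟩ := exists_subcoupling_on_rectangles hπμ hπν hB hC hBd hCd
  obtain ⟨ρ, hρμ, hρν, hγρ⟩ := Measure.exists_coupling_ge hμν' hγμ hγν
  exact ⟨ρ, hρμ, hρν, fun i hi j hj => (hγ i hi j hj).trans (hγρ _)⟩

end Couplings

theorem exists_coupling_levyProkhorovEDist_le_of_rectangles {X Y ι κ : Type*}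
    [PseudoEMetricSpace X] [MeasurableSpace X] [PseudoEMetricSpace Y] [MeasurableSpace Y]
    {π : Measure (X × Y)} [IsProbabilityMeasure π] {μ μ' : Measure X} {ν ν' : Measure Y}
    (hπμ : π.map Prod.fst = μ) (hπν : π.map Prod.snd = ν)
    [IsProbabilityMeasure μ'] [IsProbabilityMeasure ν'] {B : ι → Set X} {C : κ → Set Y}
    (hB : ∀ i, MeasurableSet (B i)) (hC : ∀ j, MeasurableSet (C j))
    (hBd : Pairwise (Disjoint on B)) (hCd : Pairwise (Disjoint on C)) {η : ℝ≥0∞}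
    (hBdiam : ∀ i, ediam (B i) ≤ η) (hCdiam : ∀ j, ediam (C j) ≤ η) {S : Finset (ι × κ)}
    (hS : 1 ≤ ∑ p ∈ S, π (B p.1 ×ˢ C p.2) *
      (μ' (B p.1) / max (μ (B p.1)) (μ' (B p.1)) * (ν' (C p.2) / max (ν (C p.2)) (ν' (C p.2))))
      + η) :
    ∃ ρ : Measure (X × Y), IsProbabilityMeasure ρ ∧ ρ.map Prod.fst = μ' ∧
      ρ.map Prod.snd = ν' ∧ levyProkhorovEDist ρ π ≤ η := by
  classical
  set s := S.image Prod.fst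
  set t := S.image Prod.snd
  obtain ⟨ρ, hρμ, hρν, hρ⟩ := exists_coupling_ge_on_rectangles (s := s) (t := t)
    (μ' := μ') (ν' := ν') hπμ hπν (by simp) hB hC (hBd.set_pairwise _) (hCd.set_pairwise _)
  have : IsProbabilityMeasure ρ := ⟨by
    rw [← preimage_univ (f := Prod.fst), ← Measure.map_apply measurable_fst .univ, hρμ,
      measure_univ]⟩
  refine ⟨ρ, this, hρμ, hρν, ?_⟩
  set cell : ι × κ → Set (X × Y) := fun p => B p.1 ×ˢ C p.2
  have hsum : 1 ≤ ∑ p ∈ s ×ˢ t, min (ρ (cell p)) (π (cell p)) + η := by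
    refine hS.trans (add_le_add_left ((Finset.sum_le_sum_of_subset Finset.subset_product).trans
      (Finset.sum_le_sum fun p hp => le_min ?_ ?_)) η)
    · exact hρ p.1 (Finset.mem_product.mp hp).1 p.2 (Finset.mem_product.mp hp).2
    · exact mul_le_of_le_one_right'
        (mul_le_one' (ENNReal.div_max_le_one _ _) (ENNReal.div_max_le_one _ _))
  exact levyProkhorovEDist_le_of_sum_min_cells (fun p _ => (hB p.1).prod (hC p.2))
    ((hBd.disjoint_prod hCd).set_pairwise _)
    (fun p _ => (ediam_prod_le _ _).trans (max_le (hBdiam p.1) (hCdiam p.2)))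
    (by simpa using hsum) (by simpa using hsum)

section Approximation

variable {X Y : Type*} [PseudoMetricSpace X] [SeparableSpace X] [MeasurableSpace X]
  [OpensMeasurableSpace X] [PseudoMetricSpace Y] [SeparableSpace Y] [MeasurableSpace Y]
  [OpensMeasurableSpace Y]

theorem eventually_exists_coupling_levyProkhorovEDist_le {ι : Type*} {L : Filter ι}
    {μs : ι → ProbabilityMeasure X} {μ : ProbabilityMeasure X}
    {νs : ι → ProbabilityMeasure Y} {ν : ProbabilityMeasure Y}
    (hμ : Tendsto μs L (𝓝 μ)) (hν : Tendsto νs L (𝓝 ν)) {π : ProbabilityMeasure (X × Y)}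
    (hπμ : π.toMeasure.map Prod.fst = μ.toMeasure) (hπν : π.toMeasure.map Prod.snd = ν.toMeasure)
    {η : ℝ≥0∞} (hη : 0 < η) :
    ∀ᶠ n in L, ∃ ρ : ProbabilityMeasure (X × Y), ρ.toMeasure.map Prod.fst = (μs n).toMeasure ∧
      ρ.toMeasure.map Prod.snd = (νs n).toMeasure ∧
      levyProkhorovEDist ρ.toMeasure π.toMeasure ≤ η := by
  obtain ⟨B, hBm, hBd, hBu, hBdiam, hBf⟩ :=
    SeparableSpace.exists_measurable_partition_ediam_le_null_frontier μ.toMeasure hη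
  obtain ⟨C, hCm, hCd, hCu, hCdiam, hCf⟩ :=
    SeparableSpace.exists_measurable_partition_ediam_le_null_frontier ν.toMeasure hη
  obtain ⟨S, hS⟩ := exists_finset_measure_univ_lt_sum_add (π := π.toMeasure)
    (fun p : ℕ × ℕ => (hBm p.1).prod (hCm p.2)) (hBd.disjoint_prod hCd)
    (by rw [iUnion_prod, hBu, hCu, univ_prod_univ]) hη
  have hcell : ∀ p : ℕ × ℕ, Tendsto (fun n => π.toMeasure (B p.1 ×ˢ C p.2) *
      ((μs n).toMeasure (B p.1) / max (μ.toMeasure (B p.1)) ((μs n).toMeasure (B p.1)) *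
        ((νs n).toMeasure (C p.2) / max (ν.toMeasure (C p.2)) ((νs n).toMeasure (C p.2)))))
      L (𝓝 (π.toMeasure (B p.1 ×ˢ C p.2))) := fun p =>
    ENNReal.tendsto_mul_div_max_mul_div_max
      (ProbabilityMeasure.tendsto_measure_of_null_frontier_of_tendsto' hμ (hBf p.1))
      (ProbabilityMeasure.tendsto_measure_of_null_frontier_of_tendsto' hν (hCf p.2))
      ((measure_mono (prod_subset_preimage_fst _ _)).trans
        (hπμ ▸ Measure.le_map_apply measurable_fst.aemeasurable _))
      ((measure_mono (prod_subset_preimage_snd _ _)).trans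
        (hπν ▸ Measure.le_map_apply measurable_snd.aemeasurable _))
      (measure_ne_top _ _) (measure_ne_top _ _)
  filter_upwards [((tendsto_finsetSum S fun p _ => hcell p).add_const η).eventually
    (lt_mem_nhds (by simpa using hS))] with n hn
  obtain ⟨ρ, hρ, hρμ, hρν, hρπ⟩ :=
    exists_coupling_levyProkhorovEDist_le_of_rectangles hπμ hπν hBm hCm hBd hCd hBdiam hCdiam hn.le
  exact ⟨⟨ρ, hρ⟩, hρμ, hρν, hρπ⟩

end Approximation

theorem couplings_lowerHemicontinuous_seq_general
    {X Y : Type*} [MetricSpace X] [SecondCountableTopology X]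
    [MeasurableSpace X] [BorelSpace X]
    [MetricSpace Y] [SecondCountableTopology Y]
    [MeasurableSpace Y] [BorelSpace Y]
    (μs : ℕ → ProbabilityMeasure X) (μ : ProbabilityMeasure X)
    (νs : ℕ → ProbabilityMeasure Y) (ν : ProbabilityMeasure Y)
    (hμ : Tendsto μs atTop (nhds μ)) (hν : Tendsto νs atTop (nhds ν))
    (π : ProbabilityMeasure (X × Y))
    (hπ : π.toMeasure.map Prod.fst = μ.toMeasure ∧ π.toMeasure.map Prod.snd = ν.toMeasure) :
    ∃ πs : ℕ → ProbabilityMeasure (X × Y),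
      (∀ n, (πs n).toMeasure.map Prod.fst = (μs n).toMeasure ∧
          (πs n).toMeasure.map Prod.snd = (νs n).toMeasure) ∧
      Tendsto πs atTop (nhds π) := by
  obtain ⟨hπμ, hπν⟩ := hπ
  let couplings (n : ℕ) : Set (LevyProkhorov (ProbabilityMeasure (X × Y))) :=
    {ρ | ρ.toMeasure.toMeasure.map Prod.fst = μs n ∧ ρ.toMeasure.toMeasure.map Prod.snd = νs n}
  obtain ⟨ρs, hρs, hlim⟩ := exists_seq_forall_mem_tendsto_of_eventually_edist_le
    (S := couplings) (x := .ofMeasure π)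
    (fun n => ⟨.ofMeasure ((μs n).prod (νs n)), by simp [couplings]⟩)
    fun ε hε => (eventually_exists_coupling_levyProkhorovEDist_le hμ hν hπμ hπν hε).mono
      fun _ ⟨ρ, hρμ, hρν, hρπ⟩ => ⟨.ofMeasure ρ, ⟨hρμ, hρν⟩, hρπ⟩
  exact ⟨fun n => (ρs n).toMeasure, hρs,
    (LevyProkhorov.continuous_toMeasure_probabilityMeasure.tendsto _).comp hlim⟩

/-- Lower hemicontinuity (sequential form): if `μₙ → μ`, `νₙ → ν` weakly and
`π ∈ Π(μ,ν)`, then there are couplings `πₙ ∈ Π(μₙ,νₙ)` with `πₙ → π` weakly. -/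
theorem couplings_lowerHemicontinuous_seq
    {X Y : Type*} [MetricSpace X] [CompleteSpace X] [SecondCountableTopology X]
    [MeasurableSpace X] [BorelSpace X]
    [MetricSpace Y] [CompleteSpace Y] [SecondCountableTopology Y]
    [MeasurableSpace Y] [BorelSpace Y]
    (μs : ℕ → ProbabilityMeasure X) (μ : ProbabilityMeasure X)
    (νs : ℕ → ProbabilityMeasure Y) (ν : ProbabilityMeasure Y)
    (hμ : Tendsto μs atTop (nhds μ)) (hν : Tendsto νs atTop (nhds ν))
    (π : ProbabilityMeasure (X × Y))
    (hπ : π.toMeasure.map Prod.fst = μ.toMeasure ∧ π.toMeasure.map Prod.snd = ν.toMeasure) :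
    ∃ πs : ℕ → ProbabilityMeasure (X × Y),
      (∀ n, (πs n).toMeasure.map Prod.fst = (μs n).toMeasure ∧
          (πs n).toMeasure.map Prod.snd = (νs n).toMeasure) ∧
      Tendsto πs atTop (nhds π) :=
  couplings_lowerHemicontinuous_seq_general μs μ νs ν hμ hν π hπ
end

section
/- (Upper hemicontinuity of the argmax correspondence) Let X, Y be Polish spaces and Φ : X × Y → ℝ bounded continuous. If μₙ → μ, νₙ → ν weakly, and πₙ ∈ Π(μₙ,νₙ) is optimal for (μₙ,νₙ) (i.e., ∫ Φ dπₙ = V(μₙ,νₙ)) with πₙ → π weakly, then π ∈ Π(μ,ν) and π is optimal for (μ,ν). -/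
/-!
The limit `π` is a coupling of `(μ, ν)` since the marginal maps are continuous. For optimality, the
point is that couplings are also lower hemicontinuous: every coupling `π'` of `(μ, ν)` is a limit
of couplings of `(μₙ, νₙ)`. Weak convergence `μₙ → μ` gives couplings of `μ` and `μₙ` with small
expected truncated distance `min (d x x') 1`: on a finite partition into small pieces with null
boundary, match as much mass of `μ` and `μₙ` within each piece as possible and couple the leftovers
independently. Gluing such couplings for both factors to `π'` along the common marginals produces a
coupling of `(μₙ, νₙ)` close to `π'` in that transport cost, hence weakly close to `π'` by the
bounded-Lipschitz criterion. Thus `∫ Φ dπ'` is a limit of numbers `≤ ∫ Φ dπₙ → ∫ Φ dπ`.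
-/

open MeasureTheory Filter

variable {X Y : Type*}

def couplings [MetricSpace X] [MeasurableSpace X] [MetricSpace Y] [MeasurableSpace Y]
    (μ : ProbabilityMeasure X) (ν : ProbabilityMeasure Y) :
    Set (ProbabilityMeasure (X × Y)) :=
  {π | π.toMeasure.map Prod.fst = μ.toMeasure ∧ π.toMeasure.map Prod.snd = ν.toMeasure}

open Set Function TopologicalSpace
open scoped ENNReal NNReal Topology

section TruncCost

variable {Z : Type*} [PseudoEMetricSpace Z] [MeasurableSpace Z]

noncomputable def truncCost (θ : Measure (Z × Z)) : ℝ≥0∞ :=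
  ∫⁻ p, min (edist p.1 p.2) 1 ∂θ

lemma truncCost_le_measure_univ (θ : Measure (Z × Z)) : truncCost θ ≤ θ univ :=
  (lintegral_mono fun _ ↦ min_le_right _ _).trans_eq lintegral_one

lemma truncCost_le_of_ae_edist_le {θ : Measure (Z × Z)} {ε : ℝ≥0∞}
    (h : ∀ᵐ p ∂θ, edist p.1 p.2 ≤ ε) : truncCost θ ≤ ε * θ univ :=
  (lintegral_mono_ae (h.mono fun _ hp ↦ (min_le_left _ _).trans hp)).trans_eq
    (lintegral_const ε)

lemma truncCost_add (θ₁ θ₂ : Measure (Z × Z)) :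
    truncCost (θ₁ + θ₂) = truncCost θ₁ + truncCost θ₂ :=
  lintegral_add_measure _ _ _

lemma truncCost_finsetSum {ι : Type*} (s : Finset ι) (θ : ι → Measure (Z × Z)) :
    truncCost (∑ i ∈ s, θ i) = ∑ i ∈ s, truncCost (θ i) :=
  lintegral_finsetSum_measure _ _ _

end TruncCost

section Coupling

variable {α β : Type*} [MeasurableSpace α] [MeasurableSpace β]

noncomputable def indepCoupling (a : Measure α) (b : Measure β) : Measure (α × β) :=
  (a univ)⁻¹ • a.prod b

lemma isProbabilityMeasure_of_fst_eq {ρ : Measure (α × β)} {μ : Measure α} [IsProbabilityMeasure μ]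
    (h : ρ.fst = μ) : IsProbabilityMeasure ρ :=
  ⟨by rw [← Measure.fst_univ, h, measure_univ]⟩

variable {a : Measure α} {b : Measure β}

lemma fst_indepCoupling [IsFiniteMeasure a] [SFinite b] (h : a univ = b univ) :
    (indepCoupling a b).fst = a := by
  rw [indepCoupling, Measure.fst, Measure.map_smul, Measure.map_fst_prod, smul_smul, ← h]
  rcases eq_or_ne (a univ) 0 with ha | ha
  · simp [Measure.measure_univ_eq_zero.mp ha]
  · rw [ENNReal.inv_mul_cancel ha (measure_ne_top _ _), one_smul]

lemma snd_indepCoupling [SFinite a] [IsFiniteMeasure b] (h : a univ = b univ) :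
    (indepCoupling a b).snd = b := by
  rw [indepCoupling, Measure.snd, Measure.map_smul, Measure.map_snd_prod, smul_smul, h]
  rcases eq_or_ne (b univ) 0 with hb | hb
  · simp [Measure.measure_univ_eq_zero.mp hb]
  · rw [ENNReal.inv_mul_cancel hb (measure_ne_top _ _), one_smul]

lemma indepCoupling_apply_univ [IsFiniteMeasure a] [SFinite b] (h : a univ = b univ) :
    indepCoupling a b univ = a univ := by
  rw [← Measure.fst_univ, fst_indepCoupling h]

instance [SFinite a] [IsFiniteMeasure b] : IsFiniteMeasure (indepCoupling a b) where
  measure_univ_lt_top := by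
    rw [indepCoupling, Measure.smul_apply, ← univ_prod_univ, Measure.prod_prod, smul_eq_mul,
      ← mul_assoc]
    exact ENNReal.mul_lt_top (ENNReal.inv_mul_le_one _ |>.trans_lt ENNReal.one_lt_top)
      (measure_lt_top _ _)

lemma div_smul_restrict_le {ρ : Measure α} {A : Set α} {c : ℝ≥0∞} (hc : c ≤ ρ A) :
    (c / ρ A) • ρ.restrict A ≤ ρ.restrict A :=
  calc (c / ρ A) • ρ.restrict A ≤ (1 : ℝ≥0∞) • ρ.restrict A := by
        gcongr; exact ENNReal.div_le_of_le_mul (by rwa [one_mul])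
    _ = ρ.restrict A := one_smul _ _

lemma div_smul_restrict_apply_univ {ρ : Measure α} [IsFiniteMeasure ρ] {A : Set α} {c : ℝ≥0∞}
    (hc : c ≤ ρ A) : ((c / ρ A) • ρ.restrict A) univ = c := by
  rw [Measure.smul_apply, Measure.restrict_apply_univ, smul_eq_mul]
  rcases eq_or_ne (ρ A) 0 with h0 | h0
  · rw [h0, mul_zero]
    exact (nonpos_iff_eq_zero.mp (h0 ▸ hc)).symm
  · exact ENNReal.div_mul_cancel h0 (measure_ne_top _ _)

lemma exists_subcoupling_restrict (μ ν : Measure α) [IsFiniteMeasure μ] [IsFiniteMeasure ν]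
    {A : Set α} (hA : MeasurableSet A) :
    ∃ γ : Measure (α × α), IsFiniteMeasure γ ∧ γ.fst ≤ μ.restrict A ∧ γ.snd ≤ ν.restrict A ∧
      γ univ = min (μ A) (ν A) ∧ ∀ᵐ p ∂γ, p ∈ A ×ˢ A := by
  set c := min (μ A) (ν A)
  set a := (c / μ A) • μ.restrict A
  set b := (c / ν A) • ν.restrict A
  have ha_le : a ≤ μ.restrict A := div_smul_restrict_le (min_le_left _ _)
  have hb_le : b ≤ ν.restrict A := div_smul_restrict_le (min_le_right _ _)
  have := isFiniteMeasure_of_le _ ha_le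
  have := isFiniteMeasure_of_le _ hb_le
  have ha : a univ = c := div_smul_restrict_apply_univ (min_le_left _ _)
  have hab : a univ = b univ := ha.trans (div_smul_restrict_apply_univ (min_le_right _ _)).symm
  refine ⟨indepCoupling a b, inferInstance, (fst_indepCoupling hab).trans_le ha_le,
    (snd_indepCoupling hab).trans_le hb_le, (indepCoupling_apply_univ hab).trans ha, ?_⟩
  have ha_mem : ∀ᵐ x ∂a, x ∈ A := Measure.ae_smul_measure (ae_restrict_mem hA) _
  have hb_mem : ∀ᵐ x ∂b, x ∈ A := Measure.ae_smul_measure (ae_restrict_mem hA) _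
  exact Measure.ae_smul_measure ((Measure.quasiMeasurePreserving_fst.ae ha_mem).and
    (Measure.quasiMeasurePreserving_snd.ae hb_mem)) _

end Coupling

section TransportCost

variable {Z : Type*} [PseudoEMetricSpace Z] [MeasurableSpace Z]

lemma exists_coupling_truncCost_le_add {μ ν : Measure Z} [IsFiniteMeasure μ] [IsFiniteMeasure ν]
    (hμν : μ univ = ν univ) (γ₀ : Measure (Z × Z)) [IsFiniteMeasure γ₀]
    (hfst : γ₀.fst ≤ μ) (hsnd : γ₀.snd ≤ ν) :
    ∃ γ : Measure (Z × Z), γ.fst = μ ∧ γ.snd = ν ∧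
      truncCost γ ≤ truncCost γ₀ + (μ univ - γ₀ univ) := by
  have hmass : (μ - γ₀.fst) univ = (ν - γ₀.snd) univ := by
    rw [Measure.sub_apply .univ hfst, Measure.sub_apply .univ hsnd, Measure.fst_univ,
      Measure.snd_univ, hμν]
  refine ⟨γ₀ + indepCoupling (μ - γ₀.fst) (ν - γ₀.snd), ?_, ?_, ?_⟩
  · rw [Measure.fst_add, fst_indepCoupling hmass, add_comm, Measure.sub_add_cancel_of_le hfst]
  · rw [Measure.snd_add, snd_indepCoupling hmass, add_comm, Measure.sub_add_cancel_of_le hsnd]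
  · rw [truncCost_add]
    gcongr
    refine (truncCost_le_measure_univ _).trans_eq ?_
    rw [indepCoupling_apply_univ hmass, Measure.sub_apply .univ hfst, Measure.fst_univ]

lemma exists_subcoupling_of_pairwiseDisjoint (μ ν : Measure Z) [IsFiniteMeasure μ]
    [IsFiniteMeasure ν] {ι : Type*} (s : Finset ι) {A : ι → Set Z}
    (hA : ∀ i, MeasurableSet (A i)) (hd : (s : Set ι).PairwiseDisjoint A) {ε : ℝ≥0∞}
    (hε : ∀ i ∈ s, ∀ x ∈ A i, ∀ y ∈ A i, edist x y ≤ ε) :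
    ∃ γ₀ : Measure (Z × Z), IsFiniteMeasure γ₀ ∧ γ₀.fst ≤ μ ∧ γ₀.snd ≤ ν ∧
      truncCost γ₀ ≤ ε * γ₀ univ ∧ γ₀ univ = ∑ i ∈ s, min (μ (A i)) (ν (A i)) := by
  choose γ hγ hfst hsnd huniv hmem using fun i ↦ exists_subcoupling_restrict μ ν (hA i)
  have hsum_le : ∀ ρ : Measure Z, ∑ i ∈ s, ρ.restrict (A i) ≤ ρ := fun ρ ↦ by
    rw [← Measure.sum_coe_finset, ← Measure.restrict_biUnion_finset hd hA]
    exact Measure.restrict_le_self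
  refine ⟨∑ i ∈ s, γ i, inferInstance, ?_, ?_, ?_, ?_⟩
  · rw [Measure.fst, Measure.map_finset_sum measurable_fst.aemeasurable]
    exact (Finset.sum_le_sum fun i _ ↦ hfst i).trans (hsum_le μ)
  · rw [Measure.snd, Measure.map_finset_sum measurable_snd.aemeasurable]
    exact (Finset.sum_le_sum fun i _ ↦ hsnd i).trans (hsum_le ν)
  · rw [truncCost_finsetSum, Measure.coe_finsetSum, Finset.sum_apply, Finset.mul_sum]
    refine Finset.sum_le_sum fun i hi ↦ truncCost_le_of_ae_edist_le ?_
    filter_upwards [hmem i] with p hp using hε i hi _ hp.1 _ hp.2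
  · rw [Measure.coe_finsetSum, Finset.sum_apply]
    exact Finset.sum_congr rfl fun i _ ↦ huniv i

lemma exists_coupling_truncCost_le_of_pairwiseDisjoint (μ ν : Measure Z) [IsProbabilityMeasure μ]
    [IsProbabilityMeasure ν] {ι : Type*} (s : Finset ι) {A : ι → Set Z}
    (hA : ∀ i, MeasurableSet (A i)) (hd : (s : Set ι).PairwiseDisjoint A) {ε : ℝ≥0∞}
    (hε : ∀ i ∈ s, ∀ x ∈ A i, ∀ y ∈ A i, edist x y ≤ ε) :
    ∃ γ : Measure (Z × Z), γ.fst = μ ∧ γ.snd = ν ∧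
      truncCost γ ≤ ε + (1 - ∑ i ∈ s, μ (A i)) + ∑ i ∈ s, (μ (A i) - ν (A i)) := by
  obtain ⟨γ₀, _, hfst, hsnd, hcost, huniv⟩ :=
    exists_subcoupling_of_pairwiseDisjoint μ ν s hA hd hε
  obtain ⟨γ, hγ₁, hγ₂, hγ⟩ := exists_coupling_truncCost_le_add (by simp) γ₀ hfst hsnd
  refine ⟨γ, hγ₁, hγ₂, hγ.trans ?_⟩
  have hγ₀_le : γ₀ univ ≤ 1 := by
    rw [← Measure.fst_univ, ← measure_univ (μ := μ)]; exact hfst univ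
  rw [add_assoc]
  gcongr
  · exact hcost.trans (mul_le_of_le_one_right zero_le hγ₀_le)
  · rw [huniv, measure_univ, tsub_le_iff_right, add_assoc, ← Finset.sum_add_distrib]
    simp_rw [tsub_add_min]
    exact le_tsub_add

end TransportCost

lemma frontier_diff_subset {T : Type*} [TopologicalSpace T] (s t : Set T) :
    frontier (s \ t) ⊆ frontier s ∪ frontier t := by
  rw [sdiff_eq, ← frontier_compl t]
  exact (frontier_inter_subset s tᶜ).trans
    (union_subset_union inter_subset_left inter_subset_right)

section WeakConvergence

variable {Z : Type*} [PseudoMetricSpace Z] [SeparableSpace Z] [MeasurableSpace Z]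
  [OpensMeasurableSpace Z]

open Metric in
lemma exists_partition_null_frontier (μ : Measure Z) [SFinite μ] [Nonempty Z] {ε : ℝ}
    (hε : 0 < ε) :
    ∃ A : ℕ → Set Z, (∀ n, MeasurableSet (A n)) ∧ Pairwise (Disjoint on A) ∧
      (⋃ n, A n) = univ ∧ (∀ n, ∀ x ∈ A n, ∀ y ∈ A n, dist x y < ε) ∧
      ∀ n, μ (frontier (A n)) = 0 := by
  obtain ⟨u, hu⟩ := exists_dense_seq Z
  have hradius (n : ℕ) : ∃ r ∈ Ioo (ε / 3) (ε / 2), μ (frontier (ball (u n) r)) = 0 := by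
    simpa only [thickening_singleton] using
      exists_null_frontier_thickening μ {u n} (by linarith : ε / 3 < ε / 2)
  choose r hr hr_null using hradius
  set B := fun n ↦ ball (u n) (r n)
  refine ⟨disjointed B, .disjointed fun _ ↦ measurableSet_ball, disjoint_disjointed B, ?_,
    ?_, fun n ↦ disjointedRec (p := fun t ↦ μ (frontier t) = 0) (fun t i ht ↦ ?_) (hr_null n)⟩
  · rw [iUnion_disjointed, eq_univ_iff_forall]
    intro x
    obtain ⟨n, hn⟩ := hu.exists_dist_lt x (by linarith : 0 < ε / 3)
    exact mem_iUnion.2 ⟨n, mem_ball.2 (hn.trans (hr n).1)⟩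
  · intro n x hx y hy
    have hx' : dist x (u n) < r n := disjointed_subset B n hx
    have hy' : dist y (u n) < r n := disjointed_subset B n hy
    linarith [dist_triangle_right x y (u n), (hr n).2]
  · exact measure_mono_null (frontier_diff_subset t (B i)) (measure_union_null ht (hr_null i))

lemma eventually_exists_coupling_truncCost_le {ι : Type*} {F : Filter ι}
    {μs : ι → ProbabilityMeasure Z} {μ : ProbabilityMeasure Z} (h : Tendsto μs F (𝓝 μ))
    {ε : ℝ≥0∞} (hε : 0 < ε) :
    ∀ᶠ i in F, ∃ γ : Measure (Z × Z), γ.fst = μ ∧ γ.snd = μs i ∧ truncCost γ ≤ ε := by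
  -- The three error terms of the partition coupling (diameter of the pieces, mass of `μ` off the
  -- first `N` pieces, deficit of `μs i` on them) are each made `< ε / 3`.
  have := nonempty_of_isProbabilityMeasure μ.toMeasure
  have hε3 : 0 < ε / 3 := ENNReal.div_pos hε.ne' (by simp)
  obtain ⟨δ, -, hδ, hδε⟩ := ENNReal.lt_iff_exists_real_btwn.1 hε3
  obtain ⟨A, hA, hd, hcover, hdiam, hnull⟩ :=
    exists_partition_null_frontier μ.toMeasure (ENNReal.ofReal_pos.1 hδ)
  have htail : Tendsto (fun N ↦ 1 - ∑ n ∈ Finset.range N, μ.toMeasure (A n)) atTop (𝓝 0) := by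
    have := ENNReal.Tendsto.sub tendsto_const_nhds
      (ENNReal.tendsto_nat_tsum fun n ↦ μ.toMeasure (A n)) (Or.inl ENNReal.one_ne_top)
    rwa [← measure_iUnion hd hA, hcover, measure_univ, tsub_self] at this
  obtain ⟨N, hN⟩ := ((tendsto_order.1 htail).2 _ hε3).exists
  have hclose : Tendsto
      (fun i ↦ ∑ n ∈ Finset.range N, (μ.toMeasure (A n) - (μs i).toMeasure (A n))) F (𝓝 0) := by
    rw [← Finset.sum_const_zero]
    refine tendsto_finsetSum _ fun n _ ↦ ?_
    rw [← tsub_self (μ.toMeasure (A n))]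
    exact ENNReal.Tendsto.sub tendsto_const_nhds
      (ProbabilityMeasure.tendsto_measure_of_null_frontier_of_tendsto' h (hnull n))
      (Or.inl (measure_ne_top _ _))
  filter_upwards [(tendsto_order.1 hclose).2 _ hε3] with i hi
  have hdiam' (n : ℕ) (_ : n ∈ Finset.range N) : ∀ x ∈ A n, ∀ y ∈ A n,
      edist x y ≤ ENNReal.ofReal δ := fun x hx y hy ↦ by
    rw [edist_dist]; exact ENNReal.ofReal_le_ofReal (hdiam n x hx y hy).le
  obtain ⟨γ, hγ₁, hγ₂, hγ⟩ := exists_coupling_truncCost_le_of_pairwiseDisjoint μ.toMeasure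
    (μs i).toMeasure (Finset.range N) hA (hd.set_pairwise _) hdiam'
  exact ⟨γ, hγ₁, hγ₂, hγ.trans <|
    (add_le_add (add_le_add hδε.le hN.le) hi.le).trans_eq (ENNReal.add_thirds ε)⟩

end WeakConvergence

section Gluing

open ProbabilityTheory

lemma map_compProd_comap {α β Ω : Type*} [MeasurableSpace α] [MeasurableSpace β]
    [MeasurableSpace Ω] (m : Measure α) [SFinite m] {g : α → β} (hg : Measurable g)
    (κ : Kernel β Ω) [IsSFiniteKernel κ] :
    (m ⊗ₘ κ.comap g hg).map (fun p ↦ (g p.1, p.2)) = m.map g ⊗ₘ κ := by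
  have hm : Measurable fun p : α × Ω ↦ (g p.1, p.2) := by fun_prop
  ext s hs
  rw [Measure.map_apply hm hs, Measure.compProd_apply (hs.preimage hm),
    Measure.compProd_apply hs, lintegral_map (Kernel.measurable_kernel_prodMk_left hs) hg]
  rfl

variable {X' Y' : Type*} [MeasurableSpace X] [MeasurableSpace Y] [MeasurableSpace X']
  [MeasurableSpace Y'] [StandardBorelSpace X'] [Nonempty X'] [StandardBorelSpace Y'] [Nonempty Y']

lemma exists_gluing_s14 (π : Measure (X × Y)) [SFinite π] (γ : Measure (X × X')) [IsFiniteMeasure γ]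
    (δ : Measure (Y × Y')) [IsFiniteMeasure δ] (hγ : γ.fst = π.fst) (hδ : δ.fst = π.snd) :
    ∃ θ : Measure ((X × Y) × (X' × Y')), θ.fst = π ∧
      θ.map (fun p ↦ (p.1.1, p.2.1)) = γ ∧ θ.map (fun p ↦ (p.1.2, p.2.2)) = δ := by
  -- Draw `(x, y) ∼ π`, then `x'` from the law of `γ` conditioned on `x`, then `y'` from the law
  -- of `δ` conditioned on `y`.
  set θ₁ := π ⊗ₘ γ.condKernel.comap Prod.fst measurable_fst
  set θ₂ := θ₁ ⊗ₘ δ.condKernel.comap (fun q ↦ q.1.2) (by fun_prop)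
  have hθ₁ : θ₁.map (fun q ↦ (q.1.1, q.2)) = γ := by
    rw [map_compProd_comap, ← Measure.fst, ← hγ, Measure.disintegrate]
  have hθ₂ : θ₂.map (fun q ↦ (q.1.1.2, q.2)) = δ := by
    refine (map_compProd_comap θ₁ (g := fun q ↦ q.1.2) _ _).trans ?_
    change θ₁.map (Prod.snd ∘ Prod.fst) ⊗ₘ _ = δ
    rw [← Measure.map_map measurable_snd measurable_fst, ← Measure.fst, Measure.fst_compProd,
      ← Measure.snd, ← hδ, Measure.disintegrate]
  have hθ₂₁ : θ₂.fst = θ₁ := Measure.fst_compProd _ _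
  have hmeas : Measurable fun q : ((X × Y) × X') × Y' ↦ (q.1.1, (q.1.2, q.2)) := by fun_prop
  refine ⟨θ₂.map fun q ↦ (q.1.1, (q.1.2, q.2)), ?_, ?_, ?_⟩
  · rw [Measure.fst, Measure.map_map measurable_fst hmeas]
    change θ₂.map (Prod.fst ∘ Prod.fst) = π
    rw [← Measure.map_map measurable_fst measurable_fst]
    change θ₂.fst.fst = π
    rw [hθ₂₁, Measure.fst_compProd]
  · rw [Measure.map_map (by fun_prop) hmeas]
    change θ₂.map ((fun q ↦ (q.1.1, q.2)) ∘ Prod.fst) = γ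
    rw [← Measure.map_map (by fun_prop) measurable_fst, ← Measure.fst, hθ₂₁, hθ₁]
  · rw [Measure.map_map (by fun_prop) hmeas]
    exact hθ₂

end Gluing

lemma abs_sub_le_mul_min_dist_one {Z : Type*} [PseudoMetricSpace Z] {f : Z → ℝ} {L : ℝ≥0}
    (hL : LipschitzWith L f) {C : ℝ} (hC : ∀ x y, dist (f x) (f y) ≤ C) (x y : Z) :
    |f x - f y| ≤ max (L : ℝ) C * min (dist x y) 1 := by
  rw [← Real.dist_eq]
  rcases le_total (dist x y) 1 with h | h
  · rw [min_eq_left h]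
    exact (hL.dist_le_mul x y).trans (by gcongr; exact le_max_left _ _)
  · rw [min_eq_right h, mul_one]
    exact (hC x y).trans (le_max_right _ _)

section Lipschitz

variable {Z : Type*} [PseudoMetricSpace Z] [SecondCountableTopology Z] [MeasurableSpace Z]
  [OpensMeasurableSpace Z]

lemma toReal_truncCost (θ : Measure (Z × Z)) :
    (truncCost θ).toReal = ∫ p, min (dist p.1 p.2) 1 ∂θ := by
  rw [integral_eq_lintegral_of_nonneg_ae (.of_forall fun _ ↦ by positivity) (by fun_prop)]
  simp_rw [ENNReal.ofReal_min, ← edist_dist, ENNReal.ofReal_one]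
  rfl

lemma abs_integral_fst_sub_integral_snd_le (θ : Measure (Z × Z)) [IsFiniteMeasure θ]
    {f : Z → ℝ} {L : ℝ≥0} (hL : LipschitzWith L f) {C : ℝ} (hC : ∀ x y, dist (f x) (f y) ≤ C) :
    |∫ x, f x ∂θ.fst - ∫ x, f x ∂θ.snd| ≤ max (L : ℝ) C * (truncCost θ).toReal := by
  set fb := BoundedContinuousFunction.mkOfBound ⟨f, hL.continuous⟩ C hC
  have hint₁ : Integrable (fun p : Z × Z ↦ f p.1) θ :=
    (fb.integrable θ.fst).comp_measurable measurable_fst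
  have hint₂ : Integrable (fun p : Z × Z ↦ f p.2) θ :=
    (fb.integrable θ.snd).comp_measurable measurable_snd
  have hdist : Integrable (fun p : Z × Z ↦ min (dist p.1 p.2) 1) θ :=
    .of_bound (by fun_prop) 1 (.of_forall fun p ↦ by
      rw [Real.norm_of_nonneg (by positivity)]; exact min_le_right _ _)
  rw [Measure.fst, Measure.snd, integral_map (by fun_prop) hL.continuous.aestronglyMeasurable,
    integral_map (by fun_prop) hL.continuous.aestronglyMeasurable, ← integral_sub hint₁ hint₂,
    toReal_truncCost, ← integral_const_mul, ← Real.norm_eq_abs]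
  exact norm_integral_le_of_norm_le (hdist.const_mul _)
    (.of_forall fun p ↦ abs_sub_le_mul_min_dist_one hL hC p.1 p.2)

lemma tendsto_of_tendsto_truncCost_zero {ι : Type*} {F : Filter ι} [F.IsCountablyGenerated]
    {ρ : ProbabilityMeasure Z} {ρs : ι → ProbabilityMeasure Z} {θ : ι → Measure (Z × Z)}
    (hfst : ∀ i, (θ i).fst = ρ) (hsnd : ∀ i, (θ i).snd = ρs i)
    (h : Tendsto (fun i ↦ truncCost (θ i)) F (𝓝 0)) : Tendsto ρs F (𝓝 ρ) := by
  rw [tendsto_iff_forall_lipschitz_integral_tendsto]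
  rintro f ⟨C, hC⟩ ⟨L, hL⟩
  rw [tendsto_iff_norm_sub_tendsto_zero]
  refine squeeze_zero (fun _ ↦ norm_nonneg _) (fun i ↦ ?_)
    (by simpa using ((ENNReal.tendsto_toReal ENNReal.zero_ne_top).comp h).const_mul (max ↑L C))
  have := isProbabilityMeasure_of_fst_eq (hfst i)
  rw [Real.norm_eq_abs, abs_sub_comm, ← hfst i, ← hsnd i]
  exact abs_integral_fst_sub_integral_snd_le (θ i) hL hC

lemma exists_forall_truncCost_le_mem {ρ : ProbabilityMeasure Z} {U : Set (ProbabilityMeasure Z)}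
    (hU : U ∈ 𝓝 ρ) : ∃ ε > 0, ∀ (ρ' : ProbabilityMeasure Z) (θ : Measure (Z × Z)),
      θ.fst = ρ → θ.snd = ρ' → truncCost θ ≤ ε → ρ' ∈ U := by
  by_contra! h
  choose ρs θ hfst hsnd hcost hρs using fun n : ℕ ↦
    h (n : ℝ≥0∞)⁻¹ (ENNReal.inv_pos.2 (ENNReal.natCast_ne_top n))
  have hlim := tendsto_of_tendsto_truncCost_zero hfst hsnd
    (tendsto_of_tendsto_of_tendsto_of_le_of_le tendsto_const_nhds
      ENNReal.tendsto_inv_nat_nhds_zero (fun _ ↦ zero_le) hcost)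
  obtain ⟨n, hn⟩ := (hlim.eventually hU).exists
  exact hρs n hn

end Lipschitz

lemma truncCost_le_add_map [PseudoEMetricSpace X] [SecondCountableTopology X] [MeasurableSpace X]
    [OpensMeasurableSpace X] [PseudoEMetricSpace Y] [SecondCountableTopology Y]
    [MeasurableSpace Y] [OpensMeasurableSpace Y] (θ : Measure ((X × Y) × (X × Y))) :
    truncCost θ ≤ truncCost (θ.map fun p ↦ (p.1.1, p.2.1)) +
      truncCost (θ.map fun p ↦ (p.1.2, p.2.2)) := by
  rw [truncCost, truncCost, truncCost, lintegral_map (by fun_prop) (by fun_prop),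
    lintegral_map (by fun_prop) (by fun_prop), ← lintegral_add_left (by fun_prop)]
  refine lintegral_mono fun p ↦ ?_
  rw [Prod.edist_eq, min_max_distrib_right]
  exact max_le le_self_add le_add_self

lemma ProbabilityMeasure.toMeasure_map_eq_of_tendsto {Ω Ω' ι : Type*} [PseudoMetricSpace Ω]
    [MeasurableSpace Ω] [OpensMeasurableSpace Ω] [PseudoMetricSpace Ω'] [MeasurableSpace Ω']
    [BorelSpace Ω'] {F : Filter ι} [F.NeBot] {f : Ω → Ω'} (hf : Continuous f)
    {πs : ι → ProbabilityMeasure Ω} {π : ProbabilityMeasure Ω} {μs : ι → ProbabilityMeasure Ω'}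
    {μ : ProbabilityMeasure Ω'} (hπ : Tendsto πs F (𝓝 π)) (hμ : Tendsto μs F (𝓝 μ))
    (h : ∀ i, (πs i).toMeasure.map f = μs i) : π.toMeasure.map f = μ := by
  have hπμ : (fun i ↦ (πs i).map hf.measurable.aemeasurable) = μs :=
    funext fun i ↦ ProbabilityMeasure.toMeasure_injective
      ((ProbabilityMeasure.toMeasure_map _ _).trans (h i))
  have := ProbabilityMeasure.tendsto_map_of_tendsto_of_continuous πs π hπ hf
  rw [hπμ] at this
  rw [← tendsto_nhds_unique this hμ, ProbabilityMeasure.toMeasure_map]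

section Couplings

variable [MetricSpace X] [MeasurableSpace X] [BorelSpace X] [MetricSpace Y] [MeasurableSpace Y]
  [BorelSpace Y]
  {ι : Type*} {F : Filter ι} {μs : ι → ProbabilityMeasure X} {μ : ProbabilityMeasure X}
  {νs : ι → ProbabilityMeasure Y} {ν : ProbabilityMeasure Y}

lemma mem_couplings_of_tendsto [SecondCountableTopologyEither X Y] [F.NeBot]
    (hμ : Tendsto μs F (𝓝 μ)) (hν : Tendsto νs F (𝓝 ν))
    {πs : ι → ProbabilityMeasure (X × Y)} {π : ProbabilityMeasure (X × Y)}
    (hπs : ∀ i, πs i ∈ couplings (μs i) (νs i)) (hπ : Tendsto πs F (𝓝 π)) :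
    π ∈ couplings μ ν :=
  ⟨ProbabilityMeasure.toMeasure_map_eq_of_tendsto continuous_fst hπ hμ fun i ↦ (hπs i).1,
    ProbabilityMeasure.toMeasure_map_eq_of_tendsto continuous_snd hπ hν fun i ↦ (hπs i).2⟩

lemma eventually_exists_mem_couplings_mem [CompleteSpace X] [SecondCountableTopology X]
    [CompleteSpace Y] [SecondCountableTopology Y]
    (hμ : Tendsto μs F (𝓝 μ)) (hν : Tendsto νs F (𝓝 ν)) {π : ProbabilityMeasure (X × Y)}
    (hπ : π ∈ couplings μ ν) {U : Set (ProbabilityMeasure (X × Y))} (hU : U ∈ 𝓝 π) :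
    ∀ᶠ i in F, ∃ ρ ∈ couplings (μs i) (νs i), ρ ∈ U := by
  have := nonempty_of_isProbabilityMeasure μ.toMeasure
  have := nonempty_of_isProbabilityMeasure ν.toMeasure
  obtain ⟨ε, hε, hεU⟩ := exists_forall_truncCost_le_mem hU
  filter_upwards [eventually_exists_coupling_truncCost_le hμ (ENNReal.half_pos hε.ne'),
    eventually_exists_coupling_truncCost_le hν (ENNReal.half_pos hε.ne')]
    with i ⟨γ, hγ₁, hγ₂, hγ⟩ ⟨δ, hδ₁, hδ₂, hδ⟩
  have := isProbabilityMeasure_of_fst_eq hγ₁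
  have := isProbabilityMeasure_of_fst_eq hδ₁
  obtain ⟨θ, hθ, hθγ, hθδ⟩ := exists_gluing_s14 π.toMeasure γ δ (hγ₁.trans hπ.1.symm)
    (hδ₁.trans hπ.2.symm)
  have hθ₁ : θ.snd.map Prod.fst = (θ.map fun p ↦ (p.1.1, p.2.1)).snd := by
    rw [Measure.snd, Measure.snd, Measure.map_map measurable_fst measurable_snd,
      Measure.map_map measurable_snd (by fun_prop)]
    rfl
  have hθ₂ : θ.snd.map Prod.snd = (θ.map fun p ↦ (p.1.2, p.2.2)).snd := by
    rw [Measure.snd, Measure.snd, Measure.map_map measurable_snd measurable_snd,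
      Measure.map_map measurable_snd (by fun_prop)]
    rfl
  have := isProbabilityMeasure_of_fst_eq hθ
  refine ⟨⟨θ.snd, inferInstance⟩, ⟨?_, ?_⟩, hεU _ θ hθ rfl ?_⟩
  · exact hθ₁.trans (by rw [hθγ, hγ₂])
  · exact hθ₂.trans (by rw [hθδ, hδ₂])
  · calc truncCost θ ≤ ε / 2 + ε / 2 := (truncCost_le_add_map θ).trans (by
          rw [hθγ, hθδ]; exact add_le_add hγ hδ)
      _ = ε := ENNReal.add_halves ε

end Couplings

/-- Upper hemicontinuity of the argmax correspondence: limits of optimal plans along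
weakly convergent marginals are optimal plans for the limit marginals. -/
theorem argmax_upperHemicontinuous
    [MetricSpace X] [CompleteSpace X] [SecondCountableTopology X]
    [MeasurableSpace X] [BorelSpace X]
    [MetricSpace Y] [CompleteSpace Y] [SecondCountableTopology Y]
    [MeasurableSpace Y] [BorelSpace Y]
    (Φ : X × Y → ℝ) (hΦc : Continuous Φ) (hΦb : ∃ C, ∀ p, |Φ p| ≤ C)
    (μs : ℕ → ProbabilityMeasure X) (μ : ProbabilityMeasure X)
    (νs : ℕ → ProbabilityMeasure Y) (ν : ProbabilityMeasure Y)
    (hμ : Tendsto μs atTop (nhds μ)) (hν : Tendsto νs atTop (nhds ν))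
    (πs : ℕ → ProbabilityMeasure (X × Y)) (π : ProbabilityMeasure (X × Y))
    (hπs : ∀ n, πs n ∈ couplings (μs n) (νs n))
    (hopt : ∀ n, (∫ q, Φ q ∂(πs n).toMeasure) =
      sSup {r : ℝ | ∃ π' ∈ couplings (μs n) (νs n), r = ∫ q, Φ q ∂π'.toMeasure})
    (hπ : Tendsto πs atTop (nhds π)) :
    π ∈ couplings μ ν ∧
      (∫ q, Φ q ∂π.toMeasure) =
        sSup {r : ℝ | ∃ π' ∈ couplings μ ν, r = ∫ q, Φ q ∂π'.toMeasure} := by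
  obtain ⟨C, hC⟩ := hΦb
  set Φb : BoundedContinuousFunction (X × Y) ℝ := .ofNormedAddCommGroup Φ hΦc C hC
  have hπμν : π ∈ couplings μ ν := mem_couplings_of_tendsto hμ hν hπs hπ
  have hlim : Tendsto (fun n ↦ ∫ q, Φ q ∂(πs n).toMeasure) atTop (𝓝 (∫ q, Φ q ∂π.toMeasure)) :=
    ProbabilityMeasure.tendsto_iff_forall_integral_tendsto.1 hπ Φb
  have hle_opt (n : ℕ) (ρ : ProbabilityMeasure (X × Y)) (hρ : ρ ∈ couplings (μs n) (νs n)) :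
      ∫ q, Φ q ∂ρ.toMeasure ≤ ∫ q, Φ q ∂(πs n).toMeasure := by
    rw [hopt n]
    refine le_csSup ⟨‖Φb‖, ?_⟩ ⟨ρ, hρ, rfl⟩
    rintro _ ⟨ρ', -, rfl⟩
    exact (le_abs_self _).trans (Φb.norm_integral_le_norm (μ := ρ'.toMeasure))
  have hmax : ∫ q, Φ q ∂π.toMeasure ∈
      upperBounds {r : ℝ | ∃ π' ∈ couplings μ ν, r = ∫ q, Φ q ∂π'.toMeasure} := by
    rintro _ ⟨π', hπ', rfl⟩
    refine le_of_forall_sub_le fun η hη ↦ ge_of_tendsto hlim ?_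
    have hU : ∀ᶠ ρ in 𝓝 π', ∫ q, Φ q ∂π'.toMeasure - η < ∫ q, Φ q ∂ρ.toMeasure :=
      (ProbabilityMeasure.continuous_integral_boundedContinuousFunction Φb |>.tendsto π'
        |>.eventually_const_lt (sub_lt_self _ hη))
    filter_upwards [eventually_exists_mem_couplings_mem hμ hν hπ' hU] with n ⟨ρ, hρ, hρU⟩
    exact hρU.le.trans (hle_opt n ρ hρ)
  exact ⟨hπμν, (IsGreatest.csSup_eq ⟨by exact ⟨π, hπμν, rfl⟩, hmax⟩).symm⟩
end

section
/- (Surplus maximization implies stability) Let X, Y be Polish spaces, μ ∈ P(X), ν ∈ P(Y), and Φ : X × Y → ℝ bounded continuous. If π ∈ Π(μ,ν) maximizes ∫ Φ dπ' over π' ∈ Π(μ,ν), then there exist U ∈ L¹(μ), W ∈ L¹(ν) with U(x) + W(y) ≥ Φ(x,y) everywhere and U(x) + W(y) = Φ(x,y) π-almost everywhere. -/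
/-!
The support `Γ` of an optimal coupling is `Φ`-cyclically monotone: if reassigning the partners
of finitely many points of `Γ` increased their total surplus, then moving a little mass of `π`
from small boxes around these points onto the products of the reassigned marginals would give a
coupling of `μ` and `ν` with strictly larger surplus. Rockafellar's construction then produces the
potentials: `U x` is the supremum, over chains in `Γ` starting from a base point, of the surplus
gained by passing along the chain and finally to `x`, and `W` is the `Φ`-conjugate of `U`. Both are
bounded and lower semicontinuous, `Φ ≤ U + W` everywhere, equality holds on `Γ`, and `Γ` has full
`π`-measure because `X × Y` is second countable.
-/

open MeasureTheory ProbabilityTheory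

section CyclicMonotonicity

variable {X Y : Type*}

def IsCyclicallyMonotone (Φ : X × Y → ℝ) (Γ : Set (X × Y)) : Prop :=
  ∀ (n : ℕ) (q : Fin n → X × Y) (σ : Equiv.Perm (Fin n)), (∀ i, q i ∈ Γ) →
    ∑ i, Φ ((q (σ i)).1, (q i).2) ≤ ∑ i, Φ (q i)

section ChainPotential

variable (Φ : X × Y → ℝ) {n : ℕ}

/-- `Φ (x, yₙ) - Φ (xₙ, yₙ) + ∑_{i < n} (Φ (xᵢ₊₁, yᵢ) - Φ (xᵢ, yᵢ))` for `q i = (xᵢ, yᵢ)`. -/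
def chainPotential (q : Fin (n + 1) → X × Y) (x : X) : ℝ :=
  Φ (x, (q (Fin.last n)).2) + ∑ i : Fin n, Φ ((q i.succ).1, (q i.castSucc).2) - ∑ i, Φ (q i)

theorem chainPotential_snoc (q : Fin (n + 1) → X × Y) (p : X × Y) (x : X) :
    chainPotential Φ (Fin.snoc q p) x = Φ (x, p.2) - Φ p + chainPotential Φ q p.1 := by
  simp only [chainPotential, Fin.sum_univ_castSucc (n := n + 1), Fin.sum_univ_castSucc (n := n),
    Fin.succ_castSucc, Fin.succ_last, Fin.snoc_last, Fin.snoc_castSucc]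
  ring

theorem chainPotential_sub_chainPotential (q : Fin (n + 1) → X × Y) (x x' : X) :
    chainPotential Φ q x - chainPotential Φ q x' =
      Φ (x, (q (Fin.last n)).2) - Φ (x', (q (Fin.last n)).2) := by
  simp only [chainPotential]
  ring

theorem chainPotential_fst_zero (q : Fin (n + 1) → X × Y) :
    chainPotential Φ q (q 0).1 = ∑ i, Φ ((q (finRotate _ i)).1, (q i).2) - ∑ i, Φ (q i) := by
  simp [chainPotential, Fin.sum_univ_castSucc (n := n), Fin.coeSucc_eq_succ]
  ring

theorem continuous_chainPotential [TopologicalSpace X] [TopologicalSpace Y] (hΦ : Continuous Φ)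
    (q : Fin (n + 1) → X × Y) : Continuous (chainPotential Φ q) := by
  unfold chainPotential
  fun_prop

end ChainPotential

structure Chain (Γ : Set (X × Y)) (z : X × Y) where
  length : ℕ
  point : Fin (length + 1) → X × Y
  point_zero : point 0 = z
  point_mem : ∀ i, point i ∈ Γ

namespace Chain

variable {Γ : Set (X × Y)} {z : X × Y}

def nil (hz : z ∈ Γ) : Chain Γ z := ⟨0, fun _ => z, rfl, fun _ => hz⟩

def snoc (c : Chain Γ z) (p : X × Y) (hp : p ∈ Γ) : Chain Γ z where
  length := c.length + 1
  point := Fin.snoc c.point p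
  point_zero := c.point_zero
  point_mem := Fin.lastCases (by simpa using hp) fun i => by simpa using c.point_mem i

theorem chainPotential_nil (Φ : X × Y → ℝ) (hz : z ∈ Γ) (x : X) :
    chainPotential Φ (nil hz).point x = Φ (x, z.2) - Φ z := by
  show chainPotential Φ (n := 0) (fun _ => z) x = _
  simp [chainPotential]

end Chain

variable {Φ : X × Y → ℝ} {Γ : Set (X × Y)} {z : X × Y} {C : ℝ}

theorem IsCyclicallyMonotone.chainPotential_nonpos (h : IsCyclicallyMonotone Φ Γ)
    (c : Chain Γ z) : chainPotential Φ c.point z.1 ≤ 0 := by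
  have h₀ := chainPotential_fst_zero Φ c.point
  rw [c.point_zero] at h₀
  rw [h₀, sub_nonpos]
  exact h _ c.point _ c.point_mem

theorem IsCyclicallyMonotone.chainPotential_le (h : IsCyclicallyMonotone Φ Γ)
    (hC : ∀ p, |Φ p| ≤ C) (c : Chain Γ z) (x : X) : chainPotential Φ c.point x ≤ 2 * C := by
  have hsub := chainPotential_sub_chainPotential Φ c.point x z.1
  have h₁ := abs_le.1 (hC (x, (c.point (Fin.last c.length)).2))
  have h₂ := abs_le.1 (hC (z.1, (c.point (Fin.last c.length)).2))
  linarith [h.chainPotential_nonpos c]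

variable (Φ Γ z) in
noncomputable def rockafellarPotential (x : X) : ℝ :=
  ⨆ c : Chain Γ z, chainPotential Φ c.point x

namespace IsCyclicallyMonotone

variable (h : IsCyclicallyMonotone Φ Γ) (hC : ∀ p, |Φ p| ≤ C)
include h hC

theorem bddAbove_range_chainPotential (x : X) :
    BddAbove (Set.range fun c : Chain Γ z => chainPotential Φ c.point x) :=
  ⟨2 * C, Set.forall_mem_range.2 fun c => h.chainPotential_le hC c x⟩

theorem chainPotential_le_rockafellarPotential (c : Chain Γ z) (x : X) :
    chainPotential Φ c.point x ≤ rockafellarPotential Φ Γ z x :=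
  le_ciSup (h.bddAbove_range_chainPotential hC x) c

theorem add_le_rockafellarPotential (hz : z ∈ Γ) {p : X × Y} (hp : p ∈ Γ) (x : X) :
    Φ (x, p.2) - Φ p + rockafellarPotential Φ Γ z p.1 ≤ rockafellarPotential Φ Γ z x := by
  have : Nonempty (Chain Γ z) := ⟨.nil hz⟩
  suffices rockafellarPotential Φ Γ z p.1 ≤ rockafellarPotential Φ Γ z x - (Φ (x, p.2) - Φ p) by
    linarith
  refine ciSup_le fun c => ?_
  have hsnoc : chainPotential Φ (Fin.snoc c.point p) x ≤ rockafellarPotential Φ Γ z x :=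
    h.chainPotential_le_rockafellarPotential hC (c.snoc p hp) x
  rw [chainPotential_snoc] at hsnoc
  linarith

theorem abs_rockafellarPotential_le (hz : z ∈ Γ) (x : X) :
    |rockafellarPotential Φ Γ z x| ≤ 2 * C := by
  have : Nonempty (Chain Γ z) := ⟨.nil hz⟩
  have hnil := h.chainPotential_le_rockafellarPotential hC (.nil hz) x
  rw [Chain.chainPotential_nil] at hnil
  have h₁ := abs_le.1 (hC (x, z.2))
  have h₂ := abs_le.1 (hC z)
  exact abs_le.2 ⟨by linarith, ciSup_le fun c => h.chainPotential_le hC c x⟩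

theorem lowerSemicontinuous_rockafellarPotential [TopologicalSpace X] [TopologicalSpace Y]
    (hΦ : Continuous Φ) : LowerSemicontinuous (rockafellarPotential Φ Γ z) :=
  lowerSemicontinuous_ciSup (h.bddAbove_range_chainPotential hC) fun c =>
    (continuous_chainPotential Φ hΦ c.point).lowerSemicontinuous

end IsCyclicallyMonotone

section Conjugate

variable (Φ) in
noncomputable def surplusConjugate (U : X → ℝ) (y : Y) : ℝ := ⨆ x, Φ (x, y) - U x

variable {U : X → ℝ} {D : ℝ}

theorem bddAbove_range_sub (hC : ∀ p, |Φ p| ≤ C) (hU : ∀ x, |U x| ≤ D) (y : Y) :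
    BddAbove (Set.range fun x => Φ (x, y) - U x) :=
  ⟨C + D, Set.forall_mem_range.2 fun x => by
    linarith [(abs_le.1 (hC (x, y))).2, (abs_le.1 (hU x)).1]⟩

theorem le_add_surplusConjugate (hC : ∀ p, |Φ p| ≤ C) (hU : ∀ x, |U x| ≤ D) (p : X × Y) :
    Φ p ≤ U p.1 + surplusConjugate Φ U p.2 := by
  have := le_ciSup (bddAbove_range_sub hC hU p.2) p.1
  simp only [surplusConjugate] at this ⊢
  linarith

theorem abs_surplusConjugate_le [Nonempty X] (hC : ∀ p, |Φ p| ≤ C) (hU : ∀ x, |U x| ≤ D)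
    (y : Y) : |surplusConjugate Φ U y| ≤ C + D := by
  obtain ⟨x⟩ := ‹Nonempty X›
  have := le_add_surplusConjugate hC hU (x, y)
  refine abs_le.2 ⟨?_, ciSup_le fun x' => ?_⟩
  · linarith [(abs_le.1 (hC (x, y))).1, (abs_le.1 (hU x)).2]
  · linarith [(abs_le.1 (hC (x', y))).2, (abs_le.1 (hU x')).1]

theorem lowerSemicontinuous_surplusConjugate [TopologicalSpace X] [TopologicalSpace Y]
    (hΦ : Continuous Φ) (hC : ∀ p, |Φ p| ≤ C) (hU : ∀ x, |U x| ≤ D) :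
    LowerSemicontinuous (surplusConjugate Φ U) :=
  lowerSemicontinuous_ciSup (bddAbove_range_sub hC hU) fun x =>
    (by fun_prop : Continuous fun y => Φ (x, y) - U x).lowerSemicontinuous

end Conjugate

theorem IsCyclicallyMonotone.exists_potentials [TopologicalSpace X] [TopologicalSpace Y]
    (h : IsCyclicallyMonotone Φ Γ) (hΓ : Γ.Nonempty) (hΦ : Continuous Φ) (hC : ∀ p, |Φ p| ≤ C) :
    ∃ (U : X → ℝ) (W : Y → ℝ), LowerSemicontinuous U ∧ LowerSemicontinuous W ∧
      (∀ x, |U x| ≤ 2 * C) ∧ (∀ y, |W y| ≤ 3 * C) ∧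
      (∀ p, Φ p ≤ U p.1 + W p.2) ∧ ∀ p ∈ Γ, U p.1 + W p.2 = Φ p := by
  obtain ⟨z, hz⟩ := hΓ
  have : Nonempty X := ⟨z.1⟩
  set U := rockafellarPotential Φ Γ z
  have hU := h.abs_rockafellarPotential_le hC hz
  refine ⟨U, surplusConjugate Φ U, h.lowerSemicontinuous_rockafellarPotential hC hΦ,
    lowerSemicontinuous_surplusConjugate hΦ hC hU, hU,
    fun y => (abs_surplusConjugate_le hC hU y).trans_eq (by ring),
    le_add_surplusConjugate hC hU, fun p hp => ?_⟩
  have hle : surplusConjugate Φ U p.2 ≤ Φ p - U p.1 :=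
    ciSup_le fun x => by linarith [h.add_le_rockafellarPotential hC hz hp x]
  linarith [le_add_surplusConjugate hC hU p]

end CyclicMonotonicity

theorem Continuous.exists_isOpen_boxes {X Y ι : Type*} [TopologicalSpace X] [TopologicalSpace Y]
    {Φ : X × Y → ℝ} (hΦ : Continuous Φ) (q : ι → X × Y) (e : Equiv.Perm ι)
    {ε : ℝ} (hε : 0 < ε) :
    ∃ (U : ι → Set X) (V : ι → Set Y), (∀ i, IsOpen (U i) ∧ IsOpen (V i) ∧ q i ∈ U i ×ˢ V i) ∧
      (∀ i, ∀ p ∈ U i ×ˢ V i, Φ p < Φ (q i) + ε) ∧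
      ∀ i, ∀ p ∈ U (e i) ×ˢ V i, Φ ((q (e i)).1, (q i).2) - ε < Φ p := by
  have hdiag (i : ι) := isOpen_prod_iff.1 (isOpen_lt hΦ continuous_const) (q i).1 (q i).2
    (show Φ (q i) < Φ (q i) + ε by linarith)
  have hcross (i : ι) := isOpen_prod_iff.1 (isOpen_lt continuous_const hΦ) (q (e i)).1 (q i).2
    (show Φ ((q (e i)).1, (q i).2) - ε < Φ ((q (e i)).1, (q i).2) by linarith)
  choose u v hu hv hxu hyv huv using hdiag
  choose u' v' hu' hv' hxu' hyv' huv' using hcross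
  refine ⟨fun i => u i ∩ u' (e.symm i), fun i => v i ∩ v' i, fun i => ⟨(hu i).inter (hu' _),
    (hv i).inter (hv' i), ⟨hxu i, by simpa using hxu' (e.symm i)⟩, hyv i, hyv' i⟩,
    fun i p hp => huv i ⟨hp.1.1, hp.2.1⟩, fun i p hp => huv' i ⟨by simpa using hp.1.2, hp.2.2⟩⟩

theorem Measurable.integrable_of_abs_le {α : Type*} [MeasurableSpace α] {f : α → ℝ}
    (hf : Measurable f) {C : ℝ} (hC : ∀ a, |f a| ≤ C) (μ : Measure α) [IsFiniteMeasure μ] :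
    Integrable f μ :=
  .of_bound hf.aestronglyMeasurable C (ae_of_all _ hC)

theorem MeasureTheory.Measure.map_sub_add_eq_of_map_eq {α β : Type*} [MeasurableSpace α]
    [MeasurableSpace β] {π σ τ : Measure α} [IsFiniteMeasure σ] (hσ : σ ≤ π) {f : α → β}
    (hf : Measurable f) (h : τ.map f = σ.map f) : (π - σ + τ).map f = π.map f := by
  rw [Measure.map_add _ _ hf, h, ← Measure.map_add _ _ hf, Measure.sub_add_cancel_of_le hσ]

theorem ProbabilityTheory.cond_le_inv_smul {α : Type*} [MeasurableSpace α] (μ : Measure α)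
    (s : Set α) : μ[|s] ≤ (μ s)⁻¹ • μ := by
  unfold cond
  gcongr
  exact Measure.restrict_le_self

section OptimalCoupling

variable {X Y : Type*} [MeasurableSpace X] [MeasurableSpace Y]

def IsOptimalCoupling (Φ : X × Y → ℝ) (π : Measure (X × Y)) : Prop :=
  ∀ π' : Measure (X × Y), IsProbabilityMeasure π' → π'.map Prod.fst = π.map Prod.fst →
    π'.map Prod.snd = π.map Prod.snd → ∫ p, Φ p ∂π' ≤ ∫ p, Φ p ∂π

namespace IsOptimalCoupling

variable {Φ : X × Y → ℝ} {π : Measure (X × Y)} [IsProbabilityMeasure π] {C : ℝ}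

theorem integral_le_of_le (hπ : IsOptimalCoupling Φ π) (hΦ : Measurable Φ)
    (hC : ∀ p, |Φ p| ≤ C) {σ τ : Measure (X × Y)} [IsFiniteMeasure σ] [IsFiniteMeasure τ]
    (hσ : σ ≤ π) (h₁ : τ.map Prod.fst = σ.map Prod.fst) (h₂ : τ.map Prod.snd = σ.map Prod.snd) :
    ∫ p, Φ p ∂τ ≤ ∫ p, Φ p ∂σ := by
  have hfst := Measure.map_sub_add_eq_of_map_eq hσ measurable_fst h₁
  have : IsProbabilityMeasure ((π - σ + τ).map Prod.fst) :=
    hfst ▸ Measure.isProbabilityMeasure_map measurable_fst.aemeasurable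
  have hopt := hπ _ (Measure.isProbabilityMeasure_of_map Prod.fst) hfst
    (Measure.map_sub_add_eq_of_map_eq hσ measurable_snd h₂)
  nth_rw 2 [← Measure.sub_add_cancel_of_le hσ] at hopt
  have hint := hΦ.integrable_of_abs_le hC
  rwa [integral_add_measure (hint _) (hint _), integral_add_measure (hint _) (hint _),
    add_le_add_iff_left] at hopt

theorem sum_integral_prod_map_le (hπ : IsOptimalCoupling Φ π) (hΦ : Measurable Φ)
    (hC : ∀ p, |Φ p| ≤ C) {ι : Type*} [Fintype ι] (P : ι → Measure (X × Y))
    [∀ i, IsProbabilityMeasure (P i)] (K : ι → ENNReal) (hK : ∀ i, K i ≠ ⊤)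
    (hP : ∀ i, P i ≤ K i • π) (e : Equiv.Perm ι) :
    ∑ i, ∫ p, Φ p ∂((P (e i)).map Prod.fst).prod ((P i).map Prod.snd) ≤ ∑ i, ∫ p, Φ p ∂P i := by
  set Q : ι → Measure (X × Y) := fun i => ((P (e i)).map Prod.fst).prod ((P i).map Prod.snd)
  have (i : ι) : IsProbabilityMeasure ((P i).map Prod.fst) :=
    Measure.isProbabilityMeasure_map measurable_fst.aemeasurable
  have (i : ι) : IsProbabilityMeasure ((P i).map Prod.snd) :=
    Measure.isProbabilityMeasure_map measurable_snd.aemeasurable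
  have hS : ∑ i, K i + 1 ≠ ⊤ := by simp [hK]
  -- The competitor is `π - c • ∑ P i + c • ∑ Q i`, with `c` small enough that `c • ∑ P i ≤ π`.
  set c : ENNReal := (∑ i, K i + 1)⁻¹
  have hc : c ≠ ⊤ := ENNReal.inv_ne_top.2 (by simp)
  have hσ : c • ∑ i, P i ≤ π :=
    calc c • ∑ i, P i ≤ c • ∑ i, K i • π := by gcongr with i; exact hP i
      _ = (c * ∑ i, K i) • π := by rw [← Finset.sum_smul, smul_smul]
      _ ≤ (1 : ENNReal) • π := by
        gcongr
        calc c * ∑ i, K i ≤ c * (∑ i, K i + 1) := by gcongr; exact le_self_add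
          _ = 1 := ENNReal.inv_mul_cancel (by simp) hS
      _ = π := one_smul _ _
  have h₁ : (c • ∑ i, Q i).map Prod.fst = (c • ∑ i, P i).map Prod.fst := by
    simp only [Measure.map_smul, Measure.map_finset_sum' measurable_fst.aemeasurable, Q,
      Measure.map_fst_prod, measure_univ, one_smul]
    rw [Equiv.sum_comp e fun i => (P i).map Prod.fst]
  have h₂ : (c • ∑ i, Q i).map Prod.snd = (c • ∑ i, P i).map Prod.snd := by
    simp only [Measure.map_smul, Measure.map_finset_sum' measurable_snd.aemeasurable, Q,
      Measure.map_snd_prod, measure_univ, one_smul]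
  have : IsFiniteMeasure (c • ∑ i, P i) := isFiniteMeasure_of_le π hσ
  have : IsFiniteMeasure (c • ∑ i, Q i) := Measure.smul_finite _ hc
  have := hπ.integral_le_of_le hΦ hC hσ h₁ h₂
  have hint := hΦ.integrable_of_abs_le hC
  rw [integral_smul_measure, integral_smul_measure, integral_finsetSum_measure fun i _ => hint _,
    integral_finsetSum_measure fun i _ => hint _] at this
  exact le_of_smul_le_smul_left this (ENNReal.toReal_pos (ENNReal.inv_ne_zero.2 hS) hc)

end IsOptimalCoupling

theorem ae_mem_prod_map_fst_prod_map_snd {P P' : Measure (X × Y)} [IsFiniteMeasure P]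
    [IsFiniteMeasure P'] {s : Set X} {t : Set Y} (hs : MeasurableSet s) (ht : MeasurableSet t)
    (h' : ∀ᵐ p ∂P', p.1 ∈ s) (h : ∀ᵐ p ∂P, p.2 ∈ t) :
    ∀ᵐ p ∂(P'.map Prod.fst).prod (P.map Prod.snd), p ∈ s ×ˢ t := by
  filter_upwards [Measure.quasiMeasurePreserving_fst.ae
      ((ae_map_iff measurable_fst.aemeasurable hs).2 h'),
    Measure.quasiMeasurePreserving_snd.ae ((ae_map_iff measurable_snd.aemeasurable ht).2 h)]
    with p h₁ h₂ using ⟨h₁, h₂⟩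

theorem IsOptimalCoupling.isCyclicallyMonotone_support [TopologicalSpace X] [TopologicalSpace Y]
    [SecondCountableTopology X] [SecondCountableTopology Y] [OpensMeasurableSpace X]
    [OpensMeasurableSpace Y] {Φ : X × Y → ℝ} {π : Measure (X × Y)} [IsProbabilityMeasure π]
    {C : ℝ} (hπ : IsOptimalCoupling Φ π) (hΦ : Continuous Φ) (hC : ∀ p, |Φ p| ≤ C) :
    IsCyclicallyMonotone Φ π.support := by
  intro n q e hq
  by_contra! hlt
  -- The `2 n` approximation errors of size `ε` stay below the gain `(2 n + 1) ε`.
  set ε := (∑ i, Φ ((q (e i)).1, (q i).2) - ∑ i, Φ (q i)) / (2 * n + 1) with hε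
  have hε0 : 0 < ε := div_pos (by linarith) (by positivity)
  obtain ⟨U, V, hUV, hdiag, hcross⟩ := hΦ.exists_isOpen_boxes q e hε0
  have hA (i : Fin n) : MeasurableSet (U i ×ˢ V i) :=
    (hUV i).1.measurableSet.prod (hUV i).2.1.measurableSet
  have hpos (i : Fin n) : π (U i ×ˢ V i) ≠ 0 := ((Measure.mem_support_iff_forall _).1 (hq i) _
    (((hUV i).1.prod (hUV i).2.1).mem_nhds (hUV i).2.2)).ne'
  set P : Fin n → Measure (X × Y) := fun i => π[|U i ×ˢ V i]
  have (i : Fin n) : IsProbabilityMeasure (P i) := cond_isProbabilityMeasure (hpos i)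
  have (i : Fin n) : IsProbabilityMeasure ((P i).map Prod.fst) :=
    Measure.isProbabilityMeasure_map measurable_fst.aemeasurable
  have (i : Fin n) : IsProbabilityMeasure ((P i).map Prod.snd) :=
    Measure.isProbabilityMeasure_map measurable_snd.aemeasurable
  have hint := hΦ.measurable.integrable_of_abs_le hC
  have hupper (i : Fin n) : ∫ p, Φ p ∂P i ≤ Φ (q i) + ε :=
    (integral_mono_ae (hint _) (integrable_const _)
      ((ae_cond_mem (hA i)).mono fun p hp => (hdiag i p hp).le)).trans_eq (by simp)
  have hlower (i : Fin n) : Φ ((q (e i)).1, (q i).2) - ε ≤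
      ∫ p, Φ p ∂((P (e i)).map Prod.fst).prod ((P i).map Prod.snd) := by
    have hbox := ae_mem_prod_map_fst_prod_map_snd (P := P i) (P' := P (e i))
      (hUV (e i)).1.measurableSet (hUV i).2.1.measurableSet
      ((ae_cond_mem (hA _)).mono fun p hp => hp.1)
      ((ae_cond_mem (hA i)).mono fun p hp => hp.2)
    exact (integral_mono_ae (integrable_const _) (hint _)
      (hbox.mono fun p hp => (hcross i p hp).le)).trans_eq' (by simp)
  have hsum := calc
    ∑ i, (Φ ((q (e i)).1, (q i).2) - ε)
      ≤ ∑ i, ∫ p, Φ p ∂((P (e i)).map Prod.fst).prod ((P i).map Prod.snd) :=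
        Finset.sum_le_sum fun i _ => hlower i
    _ ≤ ∑ i, ∫ p, Φ p ∂P i := hπ.sum_integral_prod_map_le hΦ.measurable hC P _
        (fun i => ENNReal.inv_ne_top.2 (hpos i)) (fun i => cond_le_inv_smul π _) e
    _ ≤ ∑ i, (Φ (q i) + ε) := Finset.sum_le_sum fun i _ => hupper i
  simp only [Finset.sum_sub_distrib, Finset.sum_add_distrib, Finset.sum_const, Finset.card_univ,
    Fintype.card_fin, nsmul_eq_mul] at hsum
  have : (2 * n + 1) * ε = ∑ i, Φ ((q (e i)).1, (q i).2) - ∑ i, Φ (q i) := by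
    rw [hε]; field_simp
  linarith

end OptimalCoupling

theorem surplus_max_implies_stable_general
    {X Y : Type*} [MetricSpace X] [SecondCountableTopology X]
    [MeasurableSpace X] [BorelSpace X]
    [MetricSpace Y] [SecondCountableTopology Y]
    [MeasurableSpace Y] [BorelSpace Y]
    (μ : Measure X) (ν : Measure Y) [IsProbabilityMeasure μ] [IsProbabilityMeasure ν]
    (Φ : X × Y → ℝ) (hΦc : Continuous Φ) (hΦb : ∃ C, ∀ p, |Φ p| ≤ C)
    (π : Measure (X × Y)) [IsProbabilityMeasure π]
    (hπ : π.map Prod.fst = μ ∧ π.map Prod.snd = ν)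
    (hopt : ∀ π' : Measure (X × Y), IsProbabilityMeasure π' →
      π'.map Prod.fst = μ → π'.map Prod.snd = ν →
      (∫ p, Φ p ∂π') ≤ ∫ p, Φ p ∂π) :
    ∃ (U : X → ℝ) (W : Y → ℝ), Integrable U μ ∧ Integrable W ν ∧
      (∀ p : X × Y, Φ p ≤ U p.1 + W p.2) ∧
      (∀ᵐ p ∂π, U p.1 + W p.2 = Φ p) := by
  obtain ⟨C, hC⟩ := hΦb
  obtain ⟨rfl, rfl⟩ := hπ
  have hΓ : π.support.Nonempty := Measure.nonempty_support (IsProbabilityMeasure.ne_zero π)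
  obtain ⟨U, W, hU, hW, hUC, hWC, hle, heq⟩ :=
    (IsOptimalCoupling.isCyclicallyMonotone_support hopt hΦc hC).exists_potentials hΓ hΦc hC
  refine ⟨U, W, hU.measurable.integrable_of_abs_le hUC _, hW.measurable.integrable_of_abs_le hWC _,
    hle, ?_⟩
  filter_upwards [Measure.support_mem_ae] with p hp using heq p hp

/-- Surplus maximization implies stability: if `π` maximizes `∫ Φ` over the couplings
of `μ` and `ν` for a bounded continuous surplus `Φ`, then there is a payoff pair
`(U, W)` with `Φ ≤ U + W` everywhere and equality `π`-a.e. -/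
theorem surplus_max_implies_stable
    {X Y : Type*} [MetricSpace X] [CompleteSpace X] [SecondCountableTopology X]
    [MeasurableSpace X] [BorelSpace X]
    [MetricSpace Y] [CompleteSpace Y] [SecondCountableTopology Y]
    [MeasurableSpace Y] [BorelSpace Y]
    (μ : Measure X) (ν : Measure Y) [IsProbabilityMeasure μ] [IsProbabilityMeasure ν]
    (Φ : X × Y → ℝ) (hΦc : Continuous Φ) (hΦb : ∃ C, ∀ p, |Φ p| ≤ C)
    (π : Measure (X × Y)) [IsProbabilityMeasure π]
    (hπ : π.map Prod.fst = μ ∧ π.map Prod.snd = ν)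
    (hopt : ∀ π' : Measure (X × Y), IsProbabilityMeasure π' →
      π'.map Prod.fst = μ → π'.map Prod.snd = ν →
      (∫ p, Φ p ∂π') ≤ ∫ p, Φ p ∂π) :
    ∃ (U : X → ℝ) (W : Y → ℝ), Integrable U μ ∧ Integrable W ν ∧
      (∀ p : X × Y, Φ p ≤ U p.1 + W p.2) ∧
      (∀ᵐ p ∂π, U p.1 + W p.2 = Φ p) :=
  surplus_max_implies_stable_general μ ν Φ hΦc hΦb π hπ hopt
end

section
/- (Glivenko–Cantelli / Varadarajan) Let S be a separable metric space, μ ∈ P(S), and X₁, X₂, … i.i.d. S-valued random variables with law μ. Then the empirical measures μₙ = (1/n) Σᵢ₌₁ⁿ δ_{Xᵢ} converge weakly to μ almost surely. -/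
open MeasureTheory Filter BoundedContinuousFunction ProbabilityTheory TopologicalSpace
open scoped ENNReal Topology

/-!
By the strong law of large numbers applied to indicator functions, almost surely
`μₙ(U) → μ(U)` simultaneously for all `U` in the countable family of finite unions of sets of a
countable basis of `S`. Every open set `G` is exhausted in `μ`-measure by such finite unions
inside it, which gives the portmanteau condition `μ(G) ≤ liminf μₙ(G)`, hence weak convergence.
-/

lemma Set.Countable.setOf_finset_subset {α : Type*} {s : Set α} (hs : s.Countable) :
    {T : Finset α | (T : Set α) ⊆ s}.Countable :=
  ((Set.countable_ofPred_finite_subset hs).preimage Finset.coe_injective).mono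
    fun T hT ↦ show (T : Set α).Finite ∧ _ from ⟨T.finite_toSet, hT⟩

theorem MeasureTheory.ProbabilityMeasure.tendsto_of_forall_tendsto_measure_biUnion
    {Ω ι : Type*} [MeasurableSpace Ω] [TopologicalSpace Ω] [SecondCountableTopology Ω]
    [OpensMeasurableSpace Ω] {S : Set (Set Ω)} {μs : ι → ProbabilityMeasure Ω}
    {ν : ProbabilityMeasure Ω} {l : Filter ι} [l.IsCountablyGenerated]
    (hS : ∀ u, IsOpen u → ∀ x ∈ u, ∃ s ∈ S, s ∈ 𝓝 x ∧ s ⊆ u)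
    (h : ∀ T : Finset (Set Ω), (T : Set (Set Ω)) ⊆ S →
      Tendsto (fun i ↦ μs i (⋃ t ∈ T, t)) l (𝓝 (ν (⋃ t ∈ T, t)))) :
    Tendsto μs l (𝓝 ν) := by
  rcases l.eq_or_neBot with rfl | _
  · simp
  refine tendsto_of_forall_isOpen_le_liminf fun G hG ↦ ?_
  refine (le_liminf_iff (isCoboundedUnder_ge_of_le (x := 1) l (by simp)) (by isBoundedDefault)).2
    fun r hr ↦ ?_
  obtain ⟨T, hTS, hrT, hTG⟩ := ν.exists_lt_measure_biUnion_of_isOpen hS hG hr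
  filter_upwards [(tendsto_order.1 (h T hTS)).1 r hrT] with i hi
  exact hi.trans_le (apply_mono _ hTG)

/-- For `n = 0` this is `∞ • 0 = 0`, not a probability measure. -/
noncomputable def empiricalMeasure {Ω S : Type*} [MeasurableSpace S] (X : ℕ → Ω → S) (ω : Ω)
    (n : ℕ) : Measure S :=
  (n : ℝ≥0∞)⁻¹ • ∑ i ∈ Finset.range n, Measure.dirac (X i ω)

section empiricalMeasure

variable {Ω S : Type*} [MeasurableSpace S] {X : ℕ → Ω → S} {ω : Ω} {n : ℕ} {E : Set S}

lemma empiricalMeasure_apply (hE : MeasurableSet E) :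
    empiricalMeasure X ω n E = (n : ℝ≥0∞)⁻¹ * ∑ i ∈ Finset.range n, E.indicator 1 (X i ω) := by
  simp [empiricalMeasure, Measure.dirac_apply' _ hE]

lemma isProbabilityMeasure_empiricalMeasure (hn : n ≠ 0) :
    IsProbabilityMeasure (empiricalMeasure X ω n) :=
  ⟨by simp [empiricalMeasure_apply MeasurableSet.univ, ENNReal.inv_mul_cancel, hn]⟩

lemma empiricalMeasure_real_apply (hE : MeasurableSet E) :
    (empiricalMeasure X ω n).real E = (∑ i ∈ Finset.range n, E.indicator 1 (X i ω)) / n := by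
  have h01 (x : S) : (E.indicator 1 x : ℝ≥0∞).toReal = E.indicator 1 x := by
    by_cases hx : x ∈ E <;> simp [hx]
  rw [Measure.real, empiricalMeasure_apply hE, ENNReal.toReal_mul,
    ENNReal.toReal_sum fun i _ ↦ by by_cases hx : X i ω ∈ E <;> simp [hx], div_eq_inv_mul]
  simp [h01]

end empiricalMeasure

theorem ae_tendsto_empiricalMeasure_real_apply {Ω S : Type*} [MeasurableSpace Ω]
    [MeasurableSpace S] {P : Measure Ω} [IsFiniteMeasure P] {μ : Measure S} {X : ℕ → Ω → S}
    (hmeas : ∀ i, Measurable (X i)) (hlaw : ∀ i, P.map (X i) = μ)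
    (hindep : Pairwise fun i j ↦ IndepFun (X i) (X j) P) {E : Set S} (hE : MeasurableSet E) :
    ∀ᵐ ω ∂P, Tendsto (fun n ↦ (empiricalMeasure X ω n).real E) atTop (𝓝 (μ.real E)) := by
  have hg : Measurable (E.indicator (1 : S → ℝ)) := measurable_one.indicator hE
  have hint : Integrable (E.indicator 1 ∘ X 0) P :=
    ((integrable_const (1 : ℝ)).indicator hE).comp_measurable (hmeas 0)
  have hmean : ∫ ω, E.indicator 1 (X 0 ω) ∂P = μ.real E := by
    rw [← integral_map (hmeas 0).aemeasurable hg.aestronglyMeasurable, hlaw 0,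
      integral_indicator_one hE]
  have hident (i : ℕ) : IdentDistrib (X i) (X 0) P P :=
    ⟨(hmeas i).aemeasurable, (hmeas 0).aemeasurable, (hlaw i).trans (hlaw 0).symm⟩
  have := strong_law_ae_real (fun i ω ↦ E.indicator 1 (X i ω)) hint
    (fun i j hij ↦ (hindep hij).comp hg hg) (fun i ↦ (hident i).comp hg)
  simpa only [empiricalMeasure_real_apply hE, hmean] using this

/-- Glivenko–Cantelli / Varadarajan: for i.i.d. samples `X₁, X₂, …` from `μ` on a
separable metric space `S`, the empirical measures `(1/n) ∑ᵢ δ_{Xᵢ}` converge weakly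
to `μ` almost surely (weak convergence stated via bounded continuous test functions). -/
theorem varadarajan_empirical
    {S : Type*} [MetricSpace S] [TopologicalSpace.SeparableSpace S] [MeasurableSpace S] [BorelSpace S]
    {Ω : Type*} [MeasurableSpace Ω] (P : Measure Ω) [IsProbabilityMeasure P]
    (μ : Measure S) [IsProbabilityMeasure μ]
    (X : ℕ → Ω → S) (hmeas : ∀ i, Measurable (X i))
    (hlaw : ∀ i, P.map (X i) = μ)
    (hindep : ProbabilityTheory.iIndepFun X P) :
    ∀ᵐ ω ∂P, ∀ f : S →ᵇ ℝ,
      Tendsto (fun n : ℕ => ∫ s, f s ∂(((n : ℝ≥0∞)⁻¹) •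
          ∑ i ∈ Finset.range n, Measure.dirac (X i ω)))
        atTop (nhds (∫ s, f s ∂μ)) := by
  set B := countableBasis S
  have hB : ∀ u, IsOpen u → ∀ x ∈ u, ∃ s ∈ B, s ∈ 𝓝 x ∧ s ⊆ u := fun u hu x hx ↦
    let ⟨v, hvB, hxv, hvu⟩ := (isBasis_countableBasis S).exists_subset_of_mem_open hx hu
    ⟨v, hvB, (isOpen_of_mem_countableBasis hvB).mem_nhds hxv, hvu⟩
  have hslln : ∀ᵐ ω ∂P, ∀ T ∈ {T : Finset (Set S) | (T : Set (Set S)) ⊆ B},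
      Tendsto (fun n ↦ (empiricalMeasure X ω n).real (⋃ t ∈ T, t)) atTop
        (𝓝 (μ.real (⋃ t ∈ T, t))) :=
    (ae_ball_iff (countable_countableBasis S).setOf_finset_subset).2 fun T hT ↦
      ae_tendsto_empiricalMeasure_real_apply hmeas hlaw (fun i j hij ↦ hindep.indepFun hij)
        (T.measurableSet_biUnion fun t ht ↦ (isOpen_of_mem_countableBasis (hT ht)).measurableSet)
  filter_upwards [hslln] with ω hω f
  let ν : ProbabilityMeasure S := ⟨μ, inferInstance⟩
  let μs (n : ℕ) : ProbabilityMeasure S :=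
    ⟨empiricalMeasure X ω (n + 1), isProbabilityMeasure_empiricalMeasure n.succ_ne_zero⟩
  have hweak : Tendsto μs atTop (𝓝 ν) :=
    ProbabilityMeasure.tendsto_of_forall_tendsto_measure_biUnion hB fun T hT ↦ by
      simpa [Function.comp_def, Measure.real, μs, ν] using
        (continuous_real_toNNReal.tendsto _).comp ((hω T hT).comp (tendsto_add_atTop_nat 1))
  exact (tendsto_add_atTop_iff_nat 1).1
    (ProbabilityMeasure.tendsto_iff_forall_integral_tendsto.1 hweak f)
end
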